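/- arXiv:2208.13853 — 9 statements merged into one kernel-verified Lean document; each statement's English description precedes it below -/
import Mathlib

section
/- If a voting rule is regret-free truth-telling and tops-only, then it is strategy-proof. -/
open Function

/-- A preference: a bijection from positions (`0` = bottom/worst, `m-1` = top/best)
to alternatives.  `p k` is the alternative in the `(k+1)`-th position from the bottom. -/
abbrev Pref (m : ℕ) := Equiv.Perm (Fin m)

/-- A profile: one preference for each of the `n` agents. -/
abbrev Profile (n m : ℕ) := Fin n → Pref m

/-- `x` is strictly preferred to `y` under `p`. -/
def prefers {m : ℕ} (p : Pref m) (x y : Fin m) : Prop :=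
  p.symm y < p.symm x

instance {m : ℕ} (p : Pref m) (x y : Fin m) : Decidable (prefers p x y) :=
  inferInstanceAs (Decidable (p.symm y < p.symm x))

/-- `x` is the top (best) alternative of `p`. -/
def IsBest {m : ℕ} (p : Pref m) (x : Fin m) : Prop :=
  ∀ y, p.symm y ≤ p.symm x

instance {m : ℕ} (p : Pref m) (x : Fin m) : Decidable (IsBest p x) :=
  inferInstanceAs (Decidable (∀ y, p.symm y ≤ p.symm x))

/-- Regret-free truth-telling: whenever a misreport `Pi'` by agent `i` yields a strictly
better outcome, there is a subprofile of the others (a full profile `Pstar` agreeing with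
`P` at `i`) consistent with the observed outcome at which the misreport does strictly worse. -/
def RFTT {n m : ℕ} (f : Profile n m → Fin m) : Prop :=
  ∀ (i : Fin n) (P : Profile n m) (Pi' : Pref m),
    prefers (P i) (f (update P i Pi')) (f P) →
    ∃ Pstar : Profile n m, Pstar i = P i ∧ f Pstar = f P ∧
      prefers (P i) (f Pstar) (f (update Pstar i Pi'))

/-- Strategy-proofness: truth-telling yields a weakly better outcome. -/
def StrategyProof {n m : ℕ} (f : Profile n m → Fin m) : Prop :=
  ∀ (P : Profile n m) (i : Fin n) (Pi' : Pref m),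
    f P = f (update P i Pi') ∨ prefers (P i) (f P) (f (update P i Pi'))

/-- Tops-only: the outcome only depends on the agents' top alternatives. -/
def TopsOnly {n m : ℕ} (f : Profile n m → Fin m) : Prop :=
  ∀ P P' : Profile n m, (∀ i x, IsBest (P i) x ↔ IsBest (P' i) x) → f P = f P'

/-- Efficiency: no alternative is strictly preferred to the outcome by every agent. -/
def Efficient {n m : ℕ} (f : Profile n m → Fin m) : Prop :=
  ∀ P : Profile n m, ¬ ∃ y, ∀ i, prefers (P i) y (f P)

/-- Dictatorship: some agent always gets his top alternative. -/
def Dictatorial {n m : ℕ} (f : Profile n m → Fin m) : Prop :=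
  ∃ i : Fin n, ∀ P : Profile n m, IsBest (P i) (f P)

/-- Anonymity: invariance under permutations of the agents. -/
def Anonymous {n m : ℕ} (f : Profile n m → Fin m) : Prop :=
  ∀ (P : Profile n m) (σ : Equiv.Perm (Fin n)), f P = f (fun i => P (σ i))

/-- Neutrality: relabelling the alternatives relabels the outcome accordingly. -/
def Neutral {n m : ℕ} (f : Profile n m → Fin m) : Prop :=
  ∀ (P : Profile n m) (π : Equiv.Perm (Fin m)),
    π (f P) = f (fun i => (P i).trans π)

/-- The minimal position (`0`-indexed, from the bottom) of alternative `x` in profile `P`. -/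
noncomputable def minpos {n m : ℕ} (P : Profile n m) (x : Fin m) : ℕ :=
  ⨅ i : Fin n, ((P i).symm x : ℕ)

/-- The maxmin winners of profile `P`. -/
def MaxminSet {n m : ℕ} (P : Profile n m) : Set (Fin m) :=
  {x | ∀ y, minpos P y ≤ minpos P x}

/-- An `A`-maxmin rule: breaks ties among maxmin winners by a fixed strict linear order. -/
def AMaxmin {n m : ℕ} (f : Profile n m → Fin m) : Prop :=
  ∃ r : Fin m → Fin m → Prop, IsStrictTotalOrder (Fin m) r ∧
    ∀ P : Profile n m, f P ∈ MaxminSet P ∧ ∀ y ∈ MaxminSet P, y ≠ f P → r (f P) y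

/-- An `N`-maxmin rule: breaks ties among maxmin winners by a fixed agent's preference. -/
def NMaxmin {n m : ℕ} (f : Profile n m → Fin m) : Prop :=
  ∃ i : Fin n, ∀ P : Profile n m,
    f P ∈ MaxminSet P ∧ ∀ y ∈ MaxminSet P, y ≠ f P → prefers (P i) (f P) y

/-- The score of alternative `x` in profile `P`, for scores `s` (indexed by position
from the bottom). -/
noncomputable def score {n m : ℕ} (s : Fin m → ℝ) (P : Profile n m) (x : Fin m) : ℝ :=
  ∑ i : Fin n, s ((P i).symm x)

/-- The scoring winners of profile `P`. -/
def ScoreSet {n m : ℕ} (s : Fin m → ℝ) (P : Profile n m) : Set (Fin m) :=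
  {x | ∀ y, score s P y ≤ score s P x}

/-- An `A`-scoring rule: breaks ties among scoring winners by a fixed strict linear order. -/
def AScoring {n m : ℕ} (s : Fin m → ℝ) (f : Profile n m → Fin m) : Prop :=
  ∃ r : Fin m → Fin m → Prop, IsStrictTotalOrder (Fin m) r ∧
    ∀ P : Profile n m, f P ∈ ScoreSet s P ∧ ∀ y ∈ ScoreSet s P, y ≠ f P → r (f P) y

/-- An `N`-scoring rule: breaks ties among scoring winners by a fixed agent's preference. -/
def NScoring {n m : ℕ} (s : Fin m → ℝ) (f : Profile n m → Fin m) : Prop :=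
  ∃ i : Fin n, ∀ P : Profile n m,
    f P ∈ ScoreSet s P ∧ ∀ y ∈ ScoreSet s P, y ≠ f P → prefers (P i) (f P) y

/-- The number of agents preferring `a` to `b` in profile `P`. -/
def numPref {n m : ℕ} (P : Profile n m) (a b : Fin m) : ℕ :=
  (Finset.univ.filter fun i => prefers (P i) a b).card

/-- `a` is a Condorcet winner at `P`. -/
def CondorcetWinner {n m : ℕ} (P : Profile n m) (a : Fin m) : Prop :=
  ∀ b, b ≠ a → numPref P b a < numPref P a b

/-- Condorcet consistency: the rule picks the Condorcet winner whenever one exists. -/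
def CondorcetConsistent {n m : ℕ} (f : Profile n m → Fin m) : Prop :=
  ∀ (P : Profile n m) (a : Fin m), CondorcetWinner P a → f P = a

/-- `p'` is a monotonic transformation of `p` with respect to `a`: all positions up to
(and including) the position of `a` are unchanged. -/
def MonoTransf {m : ℕ} (p p' : Pref m) (a : Fin m) : Prop :=
  ∀ k : Fin m, k ≤ p.symm a → p k = p' k

/-- Monotonicity: an alternative ranked below the outcome by agent `i` cannot become
the outcome after a monotonic transformation of `i`'s preference w.r.t. the outcome. -/
def MonotoneRule {n m : ℕ} (f : Profile n m → Fin m) : Prop :=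
  ∀ (P : Profile n m) (i : Fin n) (b : Fin m), prefers (P i) (f P) b →
    ∀ Pi' : Pref m, MonoTransf (P i) Pi' (f P) → f (update P i Pi') ≠ b

/-- One pairwise majority contest: the challenger `y` beats the incumbent `c` only if
strictly more agents prefer `y` to `c` (ties go to the incumbent, who always comes
earlier in the fixed order). -/
def duel {n m : ℕ} (P : Profile n m) (c y : Fin m) : Fin m :=
  if numPref P c y < numPref P y c then y else c

/-- Run successive pairwise contests starting from incumbent `c` against the listed
challengers in order. -/
def seRun {n m : ℕ} (P : Profile n m) : Fin m → List (Fin m) → Fin m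
  | c, [] => c
  | c, y :: rest => seRun P (duel P c y) rest

/-- The survivor of successive elimination along a list of alternatives (none if empty). -/
def seWinner? {n m : ℕ} (P : Profile n m) : List (Fin m) → Option (Fin m)
  | [] => none
  | c :: rest => some (seRun P c rest)

/-- A successive elimination rule: there is an enumeration `e 0 ≻ e 1 ≻ ⋯ ≻ e (m-1)` of the
alternatives such that the rule outputs the survivor of the sequential pairwise majority
contests (ties resolved in favour of the `≻`-greater, i.e. earlier, alternative). -/
def SuccElim {n m : ℕ} (f : Profile n m → Fin m) : Prop :=
  ∃ e : Fin m ≃ Fin m, ∀ P : Profile n m,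
    seWinner? P ((List.finRange m).map e) = some (f P)

section Aux

variable {m : ℕ}

lemma fin_le_top (hm : 2 ≤ m) (k : Fin m) : k ≤ ⟨m - 1, by omega⟩ := by
  have := k.isLt
  exact Fin.le_def.mpr (by simp; omega)

lemma isBest_iff (hm : 2 ≤ m) (p : Pref m) (x : Fin m) :
    IsBest p x ↔ x = p ⟨m - 1, by omega⟩ := by
  constructor
  · intro h
    have h1 := h (p ⟨m - 1, by omega⟩)
    rw [Equiv.symm_apply_apply] at h1
    have h2 : p.symm x = ⟨m - 1, by omega⟩ := le_antisymm (fin_le_top hm _) h1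
    calc x = p (p.symm x) := (Equiv.apply_symm_apply _ _).symm
    _ = _ := by rw [h2]
  · rintro rfl y
    rw [Equiv.symm_apply_apply]
    exact fin_le_top hm _

/-- The preference with `u` on top and `v` at the bottom. -/
noncomputable def mkP (hm : 2 ≤ m) (u v : Fin m) : Pref m :=
  (Equiv.swap ⟨0, by omega⟩ v).trans
    (Equiv.swap ((Equiv.swap ⟨0, by omega⟩ v) ⟨m - 1, by omega⟩) u)

lemma mkP_top (hm : 2 ≤ m) (u v : Fin m) : mkP hm u v ⟨m - 1, by omega⟩ = u := by
  simp [mkP]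

lemma mkP_bot (hm : 2 ≤ m) (u v : Fin m) (huv : u ≠ v) :
    mkP hm u v ⟨0, by omega⟩ = v := by
  have h0 : (Equiv.swap (⟨0, by omega⟩ : Fin m) v) ⟨0, by omega⟩ = v :=
    Equiv.swap_apply_left _ _
  have hne1 : v ≠ (Equiv.swap (⟨0, by omega⟩ : Fin m) v) ⟨m - 1, by omega⟩ := by
    intro h
    have h2 := congrArg (Equiv.swap (⟨0, by omega⟩ : Fin m) v) h
    rw [Equiv.swap_apply_right, Equiv.swap_apply_self] at h2
    exact absurd (congrArg Fin.val h2) (by simp; omega)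
  simp only [mkP, Equiv.trans_apply, h0]
  exact Equiv.swap_apply_of_ne_of_ne hne1 (Ne.symm huv)

lemma mkP_symm_bot (hm : 2 ≤ m) (u v : Fin m) (huv : u ≠ v) :
    (mkP hm u v).symm v = ⟨0, by omega⟩ :=
  (Equiv.symm_apply_eq _).mpr (mkP_bot hm u v huv).symm

lemma not_prefers_mkP (hm : 2 ≤ m) (u v : Fin m) (huv : u ≠ v) (z : Fin m) :
    ¬ prefers (mkP hm u v) v z := by
  intro h
  rw [prefers, mkP_symm_bot hm u v huv, Fin.lt_def] at h
  simp at h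

lemma prefers_mkP (hm : 2 ≤ m) (u v : Fin m) (huv : u ≠ v) (a : Fin m) (hav : a ≠ v) :
    prefers (mkP hm u v) a v := by
  rw [prefers, mkP_symm_bot hm u v huv]
  rw [Fin.lt_def]
  simp only [Fin.val_fin_lt]
  have : (mkP hm u v).symm a ≠ ⟨0, by omega⟩ := by
    intro h
    apply hav
    calc a = mkP hm u v ((mkP hm u v).symm a) := (Equiv.apply_symm_apply _ _).symm
    _ = _ := by rw [h]; exact mkP_bot hm u v huv
  rcases Nat.eq_zero_or_pos ((mkP hm u v).symm a).val with h | h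
  · exact absurd (Fin.ext h) this
  · exact h

lemma f_update_eq {n : ℕ} (hm : 2 ≤ m) (f : Profile n m → Fin m) (hto : TopsOnly f)
    (P : Profile n m) (i : Fin n) (p q : Pref m)
    (h : p ⟨m - 1, by omega⟩ = q ⟨m - 1, by omega⟩) :
    f (update P i p) = f (update P i q) := by
  apply hto
  intro j x
  by_cases hj : j = i
  · subst hj
    simp only [update_self]
    rw [isBest_iff hm, isBest_iff hm, h]
  · simp [update_of_ne hj]

end Aux

/-- If a voting rule is regret-free truth-telling and tops-only, then it is
strategy-proof. -/
theorem stmt_0 (n m : ℕ) (hn : 2 ≤ n) (hm : 2 ≤ m)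
    (f : Profile n m → Fin m) (hrf : RFTT f) (hto : TopsOnly f) :
    StrategyProof f := by
  intro P i Pi'
  by_contra hcon
  push_neg at hcon
  obtain ⟨hne, hnp⟩ := hcon
  set a : Fin m := f P with ha
  set b : Fin m := f (update P i Pi') with hb
  -- b is strictly preferred to a by agent i
  have hsne : (P i).symm a ≠ (P i).symm b := fun h => hne ((P i).symm.injective h)
  have hba : prefers (P i) b a := by
    rw [prefers] at hnp ⊢
    exact lt_of_le_of_ne (not_lt.mp hnp) hsne
  set x : Fin m := Pi' ⟨m - 1, by omega⟩ with hx
  by_cases hxb : x = b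
  · -- Case x = b: use the regret witness for the manipulation via Pi'
    obtain ⟨Ps, hPsi, hfPs, hpref⟩ := hrf i P Pi' hba
    set c : Fin m := f (update Ps i Pi') with hc
    rw [hfPs] at hpref
    -- hpref : prefers (P i) a c
    have hac : (P i).symm c < (P i).symm a := hpref
    have hcb : b ≠ c := by
      intro h
      rw [← h] at hac
      exact absurd (hac.trans hba) (lt_irrefl _)
    have hca : a ≠ c := by
      intro h
      rw [← h] at hac
      exact absurd hac (lt_irrefl _)
    set Q : Pref m := mkP hm b c with hQ
    have hQtop : Q ⟨m - 1, by omega⟩ = Pi' ⟨m - 1, by omega⟩ := by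
      rw [hQ, mkP_top, ← hxb]
    have hfQ : f (update Ps i Q) = c := f_update_eq hm f hto Ps i Q Pi' hQtop
    have hupd : update (update Ps i Q) i (P i) = Ps := by
      rw [update_idem, ← hPsi, update_eq_self]
    have hcond : prefers ((update Ps i Q) i) (f (update (update Ps i Q) i (P i)))
        (f (update Ps i Q)) := by
      rw [hupd, update_self, hfQ, hfPs]
      exact prefers_mkP hm b c hcb a hca
    obtain ⟨Pt, _, hfPt, hprefT⟩ := hrf i (update Ps i Q) (P i) hcond
    rw [update_self, hfPt, hfQ] at hprefT
    exact not_prefers_mkP hm b c hcb _ hprefT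
  · -- Case x ≠ b: build a direct contradiction with RFTT
    set Q : Pref m := mkP hm x b with hQ
    have hQtop : Q ⟨m - 1, by omega⟩ = Pi' ⟨m - 1, by omega⟩ := by
      rw [hQ, mkP_top]
    have hfQ : f (update P i Q) = b := f_update_eq hm f hto P i Q Pi' hQtop
    have hupd : update (update P i Q) i (P i) = P := by
      rw [update_idem, update_eq_self]
    have hcond : prefers ((update P i Q) i) (f (update (update P i Q) i (P i)))
        (f (update P i Q)) := by
      rw [hupd, update_self, hfQ, ← ha]
      exact prefers_mkP hm x b hxb a hne
    obtain ⟨Pt, _, hfPt, hprefT⟩ := hrf i (update P i Q) (P i) hcond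
    rw [update_self, hfPt, hfQ] at hprefT
    exact not_prefers_mkP hm x b hxb _ hprefT
end

section
/- Assume m = 2. A voting rule is regret-free truth-telling if and only if it is strategy-proof. -/
open Function

/-- Assume m = 2. A voting rule is regret-free truth-telling if and only if
it is strategy-proof. -/
theorem stmt_1 (n : ℕ) (hn : 2 ≤ n) (f : Profile n 2 → Fin 2) :
    RFTT f ↔ StrategyProof f := by
  constructor
  · intro hR P i Pi'
    by_contra h
    push_neg at h
    obtain ⟨h1, h2⟩ := h
    -- h2 : ¬ prefers (P i) (f P) (f (update P i Pi'))
    have hpref : prefers (P i) (f (update P i Pi')) (f P) := by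
      unfold prefers at h2 ⊢
      have hne : (P i).symm (f P) ≠ (P i).symm (f (update P i Pi')) :=
        fun hc => h1 ((P i).symm.injective hc)
      exact lt_of_le_of_ne (not_lt.mp h2) hne
    obtain ⟨Q, hQi, hQf, hQp⟩ := hR i P Pi' hpref
    rw [hQf] at hQp
    -- hQp : prefers (P i) (f P) (f (update Q i Pi'))
    have hne1 : f (update Q i Pi') ≠ f P := by
      intro hc; unfold prefers at hQp; rw [hc] at hQp; exact lt_irrefl _ hQp
    have hne2 : f (update P i Pi') ≠ f P := fun hc => h1 hc.symm
    have h2eq : ∀ a b c : Fin 2, a ≠ c → b ≠ c → a = b := by decide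
    have : f (update Q i Pi') = f (update P i Pi') :=
      h2eq _ _ _ hne1 hne2
    rw [this] at hQp
    unfold prefers at hQp hpref
    exact lt_irrefl _ (hQp.trans hpref)
  · intro hS i P Pi' hpref
    rcases hS P i Pi' with h | h
    · exfalso
      unfold prefers at hpref
      rw [h] at hpref
      exact lt_irrefl _ hpref
    · exfalso
      unfold prefers at hpref h
      exact lt_irrefl _ (hpref.trans h)
end

section
/- Assume m = 2. A voting rule is regret-free truth-telling if and only if it is an extended majority voting rule. -/
open Function

/-- An extended majority voting rule (for two alternatives, with `0` playing the role
of `x`): there is a monotone committee `C` of coalitions such that the outcome is `0`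
exactly when the set of agents whose top is `0` is a winning coalition. -/
def ExtMajority {n : ℕ} (f : Profile n 2 → Fin 2) : Prop :=
  ∃ C : Set (Finset (Fin n)),
    (∀ S T : Finset (Fin n), S ∈ C → S ⊂ T → T ∈ C) ∧
    ∀ P : Profile n 2,
      f P = 0 ↔ (Finset.univ.filter fun i => IsBest (P i) (0 : Fin 2)) ∈ C

/-!
With two alternatives a preference is determined by its top, so a profile is determined by the
coalition of agents ranking `0` first. Regret-free truth-telling collapses to strategy-proofness:
an outcome that a misreport beats is already the agent's worst alternative, so no subprofile
can make the misreport do strictly worse than it. Strategy-proofness in turn says exactly that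
the outcome, as a function `Finset (Fin n) → Fin 2` of that coalition, is antitone along
single-agent changes, hence antitone; and this holds precisely when the coalitions electing `0`
form an upward-closed committee.
-/

open Function Finset

lemma prefers_trichotomy {m : ℕ} (p : Pref m) (a b : Fin m) :
    prefers p a b ∨ a = b ∨ prefers p b a := by
  rcases lt_trichotomy (p.symm b) (p.symm a) with h | h | h
  · exact Or.inl h
  · exact Or.inr (Or.inl (p.symm.injective h).symm)
  · exact Or.inr (Or.inr h)

lemma not_prefers_of_prefers {p : Pref 2} {a b c : Fin 2} (hab : prefers p a b) :
    ¬ prefers p b c := by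
  unfold prefers at *
  omega

lemma antitone_iff_isUpperSet_preimage_zero {α : Type*} [Preorder α] (g : α → Fin 2) :
    Antitone g ↔ IsUpperSet (g ⁻¹' {0}) := by
  refine ⟨fun hg a b hab ha => Fin.le_zero_iff.mp (ha ▸ hg hab), fun hg a b hab => ?_⟩
  rcases Fin.exists_fin_two.mp ⟨g a, rfl⟩ with ha | ha
  · exact (hg hab ha).symm ▸ Fin.zero_le _
  · exact ha ▸ Fin.le_last _

section TwoAlternatives

/-- Positions count from the bottom, so `swap 0 1` ranks `0` first. -/
abbrev favorZero : Pref 2 := Equiv.swap 0 1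

abbrev favorOne : Pref 2 := Equiv.refl _

lemma eq_favorZero_or_eq_favorOne (p : Pref 2) : p = favorZero ∨ p = favorOne := by
  revert p; decide

lemma favorOne_ne_favorZero : favorOne ≠ favorZero := by decide

lemma isBest_zero_iff (p : Pref 2) : IsBest p 0 ↔ p = favorZero := by
  revert p; decide

lemma prefers_favorZero_iff (a b : Fin 2) : prefers favorZero a b ↔ a < b := by
  revert a b; decide

lemma prefers_favorOne_iff (a b : Fin 2) : prefers favorOne a b ↔ b < a := by
  revert a b; decide

variable {n : ℕ}

def supporters (P : Profile n 2) : Finset (Fin n) :=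
  univ.filter fun i => IsBest (P i) 0

def ofSupporters (S : Finset (Fin n)) : Profile n 2 :=
  fun i => if i ∈ S then favorZero else favorOne

lemma supporters_ofSupporters (S : Finset (Fin n)) : supporters (ofSupporters S) = S := by
  ext i
  by_cases hi : i ∈ S <;>
    simp [supporters, ofSupporters, hi, isBest_zero_iff, favorOne_ne_favorZero]

lemma ofSupporters_supporters (P : Profile n 2) : ofSupporters (supporters P) = P := by
  funext i
  rcases eq_favorZero_or_eq_favorOne (P i) with h | h <;>
    simp [supporters, ofSupporters, isBest_zero_iff, favorOne_ne_favorZero, h]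

lemma ofSupporters_insert (S : Finset (Fin n)) (i : Fin n) :
    ofSupporters (insert i S) = update (ofSupporters S) i favorZero := by
  funext j
  by_cases hj : j = i <;> simp [ofSupporters, update, hj]

lemma ofSupporters_erase (S : Finset (Fin n)) (i : Fin n) :
    ofSupporters (S.erase i) = update (ofSupporters S) i favorOne := by
  funext j
  by_cases hj : j = i <;> simp [ofSupporters, update, hj]

lemma StrategyProof.rftt {m : ℕ} {f : Profile n m → Fin m} (hf : StrategyProof f) : RFTT f := by
  intro i P p' hgain
  rcases hf P i p' with heq | hpref
  · exact absurd (heq ▸ hgain) (lt_irrefl _)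
  · exact absurd hgain (lt_asymm hpref)

lemma RFTT.strategyProof {f : Profile n 2 → Fin 2} (hf : RFTT f) : StrategyProof f := by
  intro P i p'
  rcases prefers_trichotomy (P i) (f P) (f (update P i p')) with hpref | heq | hgain
  · exact Or.inr hpref
  · exact Or.inl heq
  · obtain ⟨Q, -, hQP, hregret⟩ := hf i P p' hgain
    rw [hQP] at hregret
    exact absurd hregret (not_prefers_of_prefers hgain)

lemma rftt_iff_strategyProof (f : Profile n 2 → Fin 2) : RFTT f ↔ StrategyProof f :=
  ⟨RFTT.strategyProof, StrategyProof.rftt⟩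

lemma strategyProof_iff_forall_update_le (f : Profile n 2 → Fin 2) :
    StrategyProof f ↔
      ∀ (P : Profile n 2) (i : Fin n), f (update P i favorZero) ≤ f (update P i favorOne) := by
  constructor
  · intro hf P i
    have h := hf (update P i favorZero) i favorOne
    rw [update_idem, update_self, prefers_favorZero_iff] at h
    exact h.elim le_of_eq le_of_lt
  · intro hf P i p'
    have hP : update P i (P i) = P := update_eq_self i P
    rcases eq_favorZero_or_eq_favorOne (P i) with hPi | hPi <;>
      rcases eq_favorZero_or_eq_favorOne p' with rfl | rfl <;>
      rw [hPi] at hP ⊢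
    · exact Or.inl (by rw [hP])
    · rw [prefers_favorZero_iff, ← le_iff_eq_or_lt, ← hP, update_idem]
      exact hf P i
    · rw [prefers_favorOne_iff, eq_comm, ← le_iff_eq_or_lt, ← hP, update_idem]
      exact hf P i
    · exact Or.inl (by rw [hP])

lemma strategyProof_iff_antitone (f : Profile n 2 → Fin 2) :
    StrategyProof f ↔ Antitone (f ∘ ofSupporters) := by
  rw [strategyProof_iff_forall_update_le, antitone_iff_forall_insert_le]
  constructor
  · intro hf S i hi
    have h := hf (ofSupporters S) i
    rwa [← ofSupporters_insert, ← ofSupporters_erase, erase_eq_of_notMem hi] at h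
  · intro hf P i
    have h := hf ((supporters P).erase i) (notMem_erase i _)
    simpa only [comp_apply, ofSupporters_insert, ofSupporters_erase, update_idem,
      ofSupporters_supporters] using h

lemma extMajority_iff_isUpperSet (f : Profile n 2 → Fin 2) :
    ExtMajority f ↔ IsUpperSet {S | f (ofSupporters S) = 0} := by
  constructor
  · rintro ⟨C, hC, hfC⟩
    have hCf : {S | f (ofSupporters S) = 0} = C := by
      ext S
      rw [Set.mem_ofPred_eq, hfC, ← supporters, supporters_ofSupporters]
    rw [hCf]
    intro S T hST hS
    rcases hST.eq_or_ssubset with rfl | hST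
    · exact hS
    · exact hC S T hS hST
  · intro hf
    refine ⟨{S | f (ofSupporters S) = 0}, fun S T hS hST => hf hST.subset hS, fun P => ?_⟩
    rw [Set.mem_ofPred_eq, ← supporters, ofSupporters_supporters]

end TwoAlternatives

theorem stmt_2_general (n : ℕ) (f : Profile n 2 → Fin 2) :
    RFTT f ↔ ExtMajority f := by
  rw [rftt_iff_strategyProof, strategyProof_iff_antitone, extMajority_iff_isUpperSet,
    antitone_iff_isUpperSet_preimage_zero]
  rfl

/-- Assume m = 2. A voting rule is regret-free truth-telling if and only if
it is an extended majority voting rule. -/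
theorem stmt_2 (n : ℕ) (hn : 2 ≤ n) (f : Profile n 2 → Fin 2) :
    RFTT f ↔ ExtMajority f :=
  stmt_2_general n f
end

section
/- Assume m > 2. A voting rule is regret-free truth-telling, efficient, and tops-only if and only if it is dictatorial. -/
open Function

namespace Stmt3

open Finset

variable {n k : ℕ}

def lst : Fin (k+3) := Fin.last (k+2)

lemma isBest_iff (p : Pref (k+3)) (x : Fin (k+3)) : IsBest p x ↔ x = p lst := by
  constructor
  · intro h
    have h1 := h (p lst)
    rw [Equiv.symm_apply_apply] at h1
    have h2 : p.symm x = lst := le_antisymm (Fin.le_last _) h1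
    conv_lhs => rw [← p.apply_symm_apply x]
    rw [h2]
  · rintro rfl y
    rw [Equiv.symm_apply_apply]
    exact Fin.le_last _

def canon (x : Fin (k+3)) : Pref (k+3) := Equiv.swap lst x

lemma canon_lst (x : Fin (k+3)) : canon x lst = x := Equiv.swap_apply_left _ _

def botpref (a z : Fin (k+3)) : Pref (k+3) :=
  (Equiv.swap 0 ((canon a).symm z)).trans (canon a)

lemma botpref_zero (a z : Fin (k+3)) : botpref a z 0 = z := by
  rw [botpref, Equiv.trans_apply, Equiv.swap_apply_left, Equiv.apply_symm_apply]

lemma lst_ne_zero : (lst : Fin (k+3)) ≠ 0 := by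
  intro h
  have := congrArg Fin.val h
  simp [lst, Fin.last] at this

lemma botpref_lst (a z : Fin (k+3)) (h : a ≠ z) : botpref a z lst = a := by
  have hk : lst ≠ (canon a).symm z := by
    intro hc
    apply h
    have h2 : canon a lst = z := by rw [hc, Equiv.apply_symm_apply]
    rw [canon_lst] at h2
    exact h2
  rw [botpref, Equiv.trans_apply, Equiv.swap_apply_of_ne_of_ne lst_ne_zero hk, canon_lst]

lemma botpref_symm (a z : Fin (k+3)) : (botpref a z).symm z = 0 := by
  rw [Equiv.symm_apply_eq, botpref_zero]

lemma prefers_of_bot (p : Pref (k+3)) {z : Fin (k+3)} (hz : p.symm z = 0)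
    {w : Fin (k+3)} (hw : w ≠ z) : prefers p w z := by
  unfold prefers
  rw [hz]
  refine Fin.pos_of_ne_zero ?_
  intro h0
  exact hw (p.symm.injective (by rw [hz, h0]))

lemma not_prefers_bot (p : Pref (k+3)) {z : Fin (k+3)} (hz : p.symm z = 0)
    (w : Fin (k+3)) : ¬ prefers p z w := by
  unfold prefers
  rw [hz]
  simp [Fin.lt_def]

lemma third (x y : Fin (k+3)) : ∃ z, z ≠ x ∧ z ≠ y := by
  by_contra h
  push_neg at h
  have hsub : (Finset.univ : Finset (Fin (k+3))) ⊆ {x, y} := by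
    intro z _
    rcases eq_or_ne z x with rfl | hzx
    · exact Finset.mem_insert_self _ _
    · rw [h z hzx]
      exact Finset.mem_insert_of_mem (Finset.mem_singleton_self _)
  have h1 := Finset.card_le_card hsub
  have h2 : ({x, y} : Finset (Fin (k+3))).card ≤ 2 :=
    (Finset.card_insert_le _ _).trans (by simp)
  simp [Finset.card_univ] at h1
  omega

variable {f : Profile n (k+3) → Fin (k+3)}

def g (f : Profile n (k+3) → Fin (k+3)) (a : Fin n → Fin (k+3)) : Fin (k+3) :=
  f fun i => canon (a i)

lemma f_eq_g (hT : TopsOnly f) (P : Profile n (k+3)) :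
    f P = g f fun i => P i lst := by
  apply hT
  intro i x
  rw [isBest_iff, isBest_iff, canon_lst]

lemma lemA (hR : RFTT f) (hT : TopsOnly f) (a : Fin n → Fin (k+3)) (i : Fin n)
    (b : Fin (k+3)) (h : g f a ≠ a i) : g f (update a i b) = g f a := by
  by_contra hw
  set z := g f a with hz
  set p : Pref (k+3) := botpref (a i) z with hp
  set P : Profile n (k+3) := update (fun j => canon (a j)) i p with hP
  have hPi : P i = p := update_self _ _ _
  have htop : ∀ j, P j lst = a j := by
    intro j
    rcases eq_or_ne j i with rfl | hj
    · rw [hPi, hp]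
      exact botpref_lst _ _ (Ne.symm h)
    · rw [hP, update_of_ne hj]
      exact canon_lst _
  have hfP : f P = z := by
    rw [f_eq_g hT P]
    have he : (fun j => P j lst) = a := funext htop
    rw [he, hz]
  have htop' : ∀ j, update P i (canon b) j lst = update a i b j := by
    intro j
    rcases eq_or_ne j i with rfl | hj
    · rw [update_self, update_self]
      exact canon_lst _
    · rw [update_of_ne hj, update_of_ne hj]
      exact htop j
  have hfP' : f (update P i (canon b)) = g f (update a i b) := by
    rw [f_eq_g hT]
    have he : (fun j => update P i (canon b) j lst) = update a i b := funext htop'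
    rw [he]
  have hpref : prefers (P i) (f (update P i (canon b))) (f P) := by
    rw [hfP, hfP', hPi]
    exact prefers_of_bot p (botpref_symm _ _) hw
  obtain ⟨Ps, hPs1, hPs2, hPs3⟩ := hR i P (canon b) hpref
  rw [hPs2, hfP, hPi] at hPs3
  exact not_prefers_bot p (botpref_symm _ _) _ hPs3

lemma lemB (hE : Efficient f) (hT : TopsOnly f) (a : Fin n → Fin (k+3)) :
    ∃ i, g f a = a i := by
  by_contra h
  push_neg at h
  set z := g f a with hz
  set P : Profile n (k+3) := fun i => botpref (a i) z with hP
  have htop : ∀ j, P j lst = a j := fun j => botpref_lst _ _ (Ne.symm (h j))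
  have hfP : f P = z := by
    rw [f_eq_g hT P]
    have he : (fun j => P j lst) = a := funext htop
    rw [he, hz]
  obtain ⟨y, hy⟩ := exists_ne z
  apply hE P
  refine ⟨y, fun i => ?_⟩
  rw [hfP]
  exact prefers_of_bot _ (botpref_symm _ _) hy

def Dec (f : Profile n (k+3) → Fin (k+3)) (S : Finset (Fin n)) (x : Fin (k+3)) : Prop :=
  ∀ a : Fin n → Fin (k+3), (∀ i ∈ S, a i = x) → g f a = x

lemma spread (hR : RFTT f) (hT : TopsOnly f) (x : Fin (k+3)) :
    ∀ (c : ℕ) (a a' : Fin n → Fin (k+3)),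
      (Finset.univ.filter fun i => a i ≠ a' i).card ≤ c →
      g f a = x → (∀ i, a i = x → a' i = x) → g f a' = x := by
  intro c
  induction c with
  | zero =>
    intro a a' hc hg _
    have hempty : (Finset.univ.filter fun i => a i ≠ a' i) = ∅ :=
      Finset.card_eq_zero.mp (Nat.le_zero.mp hc)
    have hall : a = a' := by
      funext i
      by_contra hne
      have hmem : i ∈ Finset.univ.filter fun j => a j ≠ a' j := by simp [hne]
      rw [hempty] at hmem
      exact absurd hmem (Finset.notMem_empty i)
    rwa [← hall]
  | succ c ih =>
    intro a a' hc hg hkeep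
    by_cases hd : a = a'
    · rwa [← hd]
    have hex : ∃ i, a i ≠ a' i := by
      by_contra hno
      push_neg at hno
      exact hd (funext hno)
    obtain ⟨i, hi⟩ := hex
    have hax : a i ≠ x := fun hxx => hi (by rw [hxx, hkeep i hxx])
    have hgi : g f a ≠ a i := by
      rw [hg]
      exact fun hh => hax hh.symm
    have h2 : g f (update a i (a' i)) = x := by
      rw [lemA hR hT a i _ hgi]
      exact hg
    refine ih (update a i (a' i)) a' ?_ h2 ?_
    · have hmem : i ∈ Finset.univ.filter fun j => a j ≠ a' j := by simp [hi]
      have hsub : (Finset.univ.filter fun j => update a i (a' i) j ≠ a' j)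
          ⊆ (Finset.univ.filter fun j => a j ≠ a' j).erase i := by
        intro j hj
        rw [Finset.mem_filter] at hj
        rcases eq_or_ne j i with rfl | hji
        · rw [update_self] at hj
          exact absurd rfl hj.2
        · rw [update_of_ne hji] at hj
          exact Finset.mem_erase.mpr ⟨hji, Finset.mem_filter.mpr ⟨Finset.mem_univ _, hj.2⟩⟩
      have h3 := Finset.card_le_card hsub
      have h4 := Finset.card_erase_of_mem hmem
      omega
    · intro j hj
      rcases eq_or_ne j i with rfl | hji
      · rwa [update_self] at hj
      · rw [update_of_ne hji] at hj
        exact hkeep j hj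

lemma dec_of_win (hR : RFTT f) (hT : TopsOnly f) (a : Fin n → Fin (k+3)) (x : Fin (k+3))
    (hg : g f a = x) : Dec f (Finset.univ.filter fun i => a i = x) x := by
  intro a' h'
  refine spread hR hT x _ a a' le_rfl hg fun i hix => h' i ?_
  simp [hix]

lemma dec_inter {S T : Finset (Fin n)} {x y : Fin (k+3)}
    (hx : Dec f S x) (hy : Dec f T y) (hxy : x ≠ y) (h : ∀ i ∈ S, i ∉ T) : False := by
  set a : Fin n → Fin (k+3) := fun i => if i ∈ S then x else y with ha
  have h1 : g f a = x := hx a fun i hi => by simp [ha, hi]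
  have h2 : g f a = y := hy a fun i hi => by
    have hns : i ∉ S := fun hiS => h i hiS hi
    simp [ha, hns]
  exact hxy (by rw [← h1, ← h2])

lemma dict_of_singleton (hR : RFTT f) (hT : TopsOnly f) (hE : Efficient f)
    (i : Fin n) (x : Fin (k+3)) (hd : Dec f {i} x) : Dictatorial f := by
  have hall : ∀ y, Dec f ({i} : Finset (Fin n)) y := by
    intro y
    rcases eq_or_ne y x with rfl | hyx
    · exact hd
    obtain ⟨z, hzx, hzy⟩ := third x y
    set a : Fin n → Fin (k+3) := fun j => if j = i then y else z with ha
    obtain ⟨j, hj⟩ := lemB hE hT a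
    have haj : a j = y ∨ a j = z := by
      simp only [ha]
      split_ifs <;> tauto
    rcases haj with h1 | h1 <;> rw [h1] at hj
    · have hwin := dec_of_win hR hT a y hj
      have hfil : (Finset.univ.filter fun j' => a j' = y) = {i} := by
        ext j'
        simp only [Finset.mem_filter, Finset.mem_univ, true_and, Finset.mem_singleton, ha]
        constructor
        · intro hy'
          by_contra hji
          rw [if_neg hji] at hy'
          exact hzy hy'
        · rintro rfl
          rw [if_pos rfl]
      rwa [hfil] at hwin
    · exfalso
      have hwin := dec_of_win hR hT a z hj
      refine dec_inter hd hwin (fun hxz => hzx hxz.symm) ?_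
      intro j' hj' hmem
      rw [Finset.mem_singleton] at hj'
      subst hj'
      rw [Finset.mem_filter] at hmem
      have hv : a j' = z := hmem.2
      simp only [ha, if_pos rfl] at hv
      exact hzy (hv ▸ rfl)
  refine ⟨i, fun P => ?_⟩
  rw [isBest_iff, f_eq_g hT P]
  exact hall (P i lst) (fun j => P j lst) fun j hj => by
    rw [Finset.mem_singleton] at hj
    rw [hj]

lemma main (hn : 0 < n) (hR : RFTT f) (hT : TopsOnly f) (hE : Efficient f) :
    Dictatorial f := by
  have key : ∀ (c : ℕ) (S : Finset (Fin n)) (x : Fin (k+3)),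
      S.card ≤ c → S.Nonempty → Dec f S x → Dictatorial f := by
    intro c
    induction c with
    | zero =>
      intro S x hc hne _
      have := Finset.card_pos.mpr hne
      omega
    | succ c ih =>
      intro S x hc hne hdec
      obtain ⟨i, hi⟩ := hne
      by_cases hsing : S = {i}
      · exact dict_of_singleton hR hT hE i x (hsing ▸ hdec)
      · have hS2 : (S.erase i).Nonempty := by
          by_contra hemp
          rw [Finset.not_nonempty_iff_eq_empty] at hemp
          apply hsing
          apply Finset.eq_singleton_iff_unique_mem.mpr
          refine ⟨hi, fun j hj => ?_⟩
          by_contra hji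
          exact (Finset.eq_empty_iff_forall_notMem.mp hemp j)
            (Finset.mem_erase.mpr ⟨hji, hj⟩)
        obtain ⟨y, hyx, -⟩ := third x x
        obtain ⟨z, hzx, hzy⟩ := third x y
        set a : Fin n → Fin (k+3) :=
          fun j => if j = i then x else if j ∈ S.erase i then y else z with ha
        obtain ⟨j, hj⟩ := lemB hE hT a
        have haj : a j = x ∨ a j = y ∨ a j = z := by
          simp only [ha]
          split_ifs <;> tauto
        rcases haj with h1 | h1 | h1 <;> rw [h1] at hj
        · apply dict_of_singleton hR hT hE i x
          have hwin := dec_of_win hR hT a x hj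
          have hfil : (Finset.univ.filter fun j' => a j' = x) = {i} := by
            ext j'
            simp only [Finset.mem_filter, Finset.mem_univ, true_and, Finset.mem_singleton, ha]
            constructor
            · intro hx'
              by_contra hji
              rw [if_neg hji] at hx'
              by_cases hm2 : j' ∈ S.erase i
              · rw [if_pos hm2] at hx'
                exact hyx hx'
              · rw [if_neg hm2] at hx'
                exact hzx hx'
            · rintro rfl
              rw [if_pos rfl]
          rwa [hfil] at hwin
        · have hwin := dec_of_win hR hT a y hj
          have hfil : (Finset.univ.filter fun j' => a j' = y) = S.erase i := by
            ext j'
            simp only [Finset.mem_filter, Finset.mem_univ, true_and, ha]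
            constructor
            · intro hy'
              by_cases hji : j' = i
              · rw [if_pos hji] at hy'
                exact absurd hy'.symm hyx
              · rw [if_neg hji] at hy'
                by_cases hm2 : j' ∈ S.erase i
                · exact hm2
                · rw [if_neg hm2] at hy'
                  exact absurd hy' hzy
            · intro hm2
              have hji : j' ≠ i := (Finset.mem_erase.mp hm2).1
              rw [if_neg hji, if_pos hm2]
          refine ih (S.erase i) y ?_ hS2 (hfil ▸ hwin)
          have h4 := Finset.card_erase_of_mem hi
          omega
        · exfalso
          have hwin := dec_of_win hR hT a z hj
          refine dec_inter hdec hwin (fun hxz => hzx hxz.symm) ?_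
          intro j' hj'S hmem
          rw [Finset.mem_filter] at hmem
          have hv : a j' = z := hmem.2
          simp only [ha] at hv
          by_cases hji : j' = i
          · rw [if_pos hji] at hv
            exact hzx hv.symm
          · have hm2 : j' ∈ S.erase i := Finset.mem_erase.mpr ⟨hji, hj'S⟩
            rw [if_neg hji, if_pos hm2] at hv
            exact hzy hv.symm
  refine key n Finset.univ 0 ?_ ⟨⟨0, hn⟩, Finset.mem_univ _⟩ ?_
  · simp [Finset.card_univ]
  · intro a ha
    obtain ⟨i, hi⟩ := lemB hE hT a
    rw [hi, ha i (Finset.mem_univ i)]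

lemma backward (hD : Dictatorial f) : RFTT f ∧ Efficient f ∧ TopsOnly f := by
  obtain ⟨i, hi⟩ := hD
  have hbest : ∀ P : Profile n (k+3), f P = P i lst :=
    fun P => (isBest_iff _ _).mp (hi P)
  refine ⟨?_, ?_, ?_⟩
  · intro j P Pj' hpref
    exfalso
    by_cases hji : j = i
    · subst hji
      unfold prefers at hpref
      rw [hbest P, Equiv.symm_apply_apply] at hpref
      exact absurd hpref (not_lt.mpr (Fin.le_last _))
    · have hPi : update P j Pj' i = P i := update_of_ne (fun h => hji h.symm) _ _
      have h2 : f (update P j Pj') = f P := by rw [hbest, hbest, hPi]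
      rw [h2] at hpref
      exact lt_irrefl _ hpref
  · rintro P ⟨y, hy⟩
    have h1 := hy i
    unfold prefers at h1
    rw [hbest P, Equiv.symm_apply_apply] at h1
    exact absurd h1 (not_lt.mpr (Fin.le_last _))
  · intro P P' h
    rw [hbest, hbest]
    have h1 : IsBest (P' i) (P i lst) := (h i (P i lst)).mp ((isBest_iff _ _).mpr rfl)
    exact (isBest_iff _ _).mp h1

end Stmt3

/-- Assume m > 2. A voting rule is regret-free truth-telling, efficient, and
tops-only if and only if it is dictatorial. -/
theorem stmt_3 (n m : ℕ) (hn : 2 ≤ n) (hm : 2 < m)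
    (f : Profile n m → Fin m) :
    (RFTT f ∧ Efficient f ∧ TopsOnly f) ↔ Dictatorial f := by
  obtain ⟨k, rfl⟩ : ∃ k, m = k + 3 := ⟨m - 3, by omega⟩
  constructor
  · rintro ⟨hR, hE, hT⟩
    exact Stmt3.main (by omega : 0 < n) hR hT hE
  · intro hD
    exact Stmt3.backward hD
end

section
/- Every N-maxmin rule is regret-free truth-telling. -/
open Function

set_option linter.unusedSectionVars false
set_option linter.unusedVariables false
set_option maxHeartbeats 1000000

namespace S5
open Finset
variable {n m : ℕ}

def pos (p : Pref m) (x : Fin m) : ℕ := (p.symm x : ℕ)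

lemma prefers_iff (p : Pref m) (x y : Fin m) : prefers p x y ↔ pos p y < pos p x := by
  rw [prefers, Fin.lt_def]; rfl

lemma pos_lt (p : Pref m) (x : Fin m) : pos p x < m := (p.symm x).isLt

lemma pos_inj (p : Pref m) {x y : Fin m} (h : pos p x = pos p y) : x = y := by
  have := Fin.val_injective h
  exact p.symm.injective this

variable [NeZero n]
set_option linter.unusedSectionVars false

lemma minpos_le (P : Fin n → Pref m) (k : Fin n) (x : Fin m) :
    minpos P x ≤ pos (P k) x :=
  csInf_le (OrderBot.bddBelow _) (Set.mem_range_self k)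

lemma le_minpos (P : Fin n → Pref m) (x : Fin m) (c : ℕ)
    (h : ∀ k, c ≤ pos (P k) x) : c ≤ minpos P x :=
  le_ciInf h

lemma minpos_witness (P : Fin n → Pref m) (x : Fin m) :
    ∃ k, minpos P x = pos (P k) x := by
  have : Nonempty (Fin n) := ⟨⟨0, Nat.pos_of_ne_zero (NeZero.ne n)⟩⟩
  obtain ⟨k, hk⟩ := Set.mem_range.mp (Nat.sInf_mem (Set.range_nonempty
    (fun i : Fin n => ((P i).symm x : ℕ))))
  exact ⟨k, hk.symm⟩

-- cardinality of an initial segment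
lemma card_pos_lt (p : Pref m) (c : ℕ) (hc : c ≤ m) :
    #(univ.filter fun z => pos p z < c) = c := by
  have h1 : (univ.filter fun z => pos p z < c)
      = Finset.map p.toEmbedding (univ.filter fun w : Fin m => (w : ℕ) < c) := by
    ext z
    simp only [mem_filter, mem_univ, true_and, Finset.mem_map, Equiv.coe_toEmbedding]
    constructor
    · intro h; exact ⟨p.symm z, h, p.apply_symm_apply z⟩
    · rintro ⟨w, hw, rfl⟩; simpa [pos] using hw
  rw [h1, Finset.card_map]
  rcases eq_or_lt_of_le hc with heq | hlt
  · have : (univ.filter fun w : Fin m => (w : ℕ) < c) = univ := by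
      ext w; simp [heq, w.isLt]
    simp [this, heq]
  · have : (univ.filter fun w : Fin m => (w : ℕ) < c) = Finset.Iio ⟨c, hlt⟩ := by
      ext w; simp [Finset.mem_Iio, Fin.lt_def]
    rw [this, Fin.card_Iio]

lemma pos_eq_card (p : Pref m) (x : Fin m) :
    pos p x = #(univ.filter fun z => pos p z < pos p x) :=
  (card_pos_lt p (pos p x) (le_of_lt (pos_lt p x))).symm

end S5


namespace S5
open Finset
variable {m : ℕ}

/-- rank of `x` according to an injective key function -/
def rank (g : Fin m → ℚ) (x : Fin m) : ℕ := #(univ.filter fun z => g z < g x)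

lemma rank_lt (g : Fin m → ℚ) (x : Fin m) [NeZero m] : rank g x < m := by
  have hsub : (univ.filter fun z => g z < g x) ⊆ univ.erase x := by
    intro z hz
    rcases mem_filter.mp hz with ⟨_, hlt⟩
    exact mem_erase.mpr ⟨by rintro rfl; exact lt_irrefl _ hlt, mem_univ z⟩
  calc rank g x ≤ #(univ.erase x) := card_le_card hsub
    _ = m - 1 := by rw [card_erase_of_mem (mem_univ x), card_univ, Fintype.card_fin]
    _ < m := Nat.sub_lt (Nat.pos_of_ne_zero (NeZero.ne m)) one_pos

lemma rank_strictmono (g : Fin m → ℚ) {x y : Fin m} (h : g x < g y) :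
    rank g x < rank g y := by
  apply card_lt_card
  constructor
  · intro z hz
    rcases mem_filter.mp hz with ⟨_, hlt⟩
    exact mem_filter.mpr ⟨mem_univ z, lt_trans hlt h⟩
  · intro hsub
    have hx : x ∈ univ.filter fun z => g z < g y := mem_filter.mpr ⟨mem_univ x, h⟩
    have := mem_filter.mp (hsub hx)
    exact lt_irrefl _ this.2

lemma rank_injective (g : Fin m → ℚ) (hg : Function.Injective g) :
    Function.Injective (rank g) := by
  intro x y hxy
  by_contra hne
  rcases lt_trichotomy (g x) (g y) with h | h | h
  · exact absurd hxy (Nat.ne_of_lt (rank_strictmono g h))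
  · exact hne (hg h)
  · exact absurd hxy.symm (Nat.ne_of_lt (rank_strictmono g h))

/-- preference built from an injective key: higher key = higher position -/
noncomputable def mkPref [NeZero m] (g : Fin m → ℚ) (hg : Function.Injective g) : Pref m :=
  (Equiv.ofBijective (fun x => (⟨rank g x, rank_lt g x⟩ : Fin m))
    (Finite.injective_iff_bijective.mp
      (fun x y hxy => rank_injective g hg (congrArg Fin.val hxy)))).symm

lemma pos_mkPref [NeZero m] (g : Fin m → ℚ) (hg : Function.Injective g) (x : Fin m) :
    pos (mkPref g hg) x = rank g x := by
  simp [pos, mkPref, Equiv.symm_symm, Equiv.ofBijective]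

end S5


namespace S5
open Finset
variable {m : ℕ}

/-- key function: `xs` on top, `a` second, everything else ordered as in `σ`. -/
def gkey (σ : Pref m) (xs a : Fin m) : Fin m → ℚ :=
  fun y => if y = xs then (m : ℚ) + 1 else if y = a then (m : ℚ) else (pos σ y : ℚ)

lemma gkey_top (σ : Pref m) (xs a : Fin m) : gkey σ xs a xs = (m : ℚ) + 1 := by
  simp [gkey]

lemma gkey_snd (σ : Pref m) (xs a : Fin m) (hxa : xs ≠ a) : gkey σ xs a a = (m : ℚ) := by
  simp [gkey, Ne.symm hxa]

lemma gkey_of_ne (σ : Pref m) (xs a y : Fin m) (h1 : y ≠ xs) (h2 : y ≠ a) :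
    gkey σ xs a y = (pos σ y : ℚ) := by
  simp [gkey, h1, h2]

lemma gkey_base_lt (σ : Pref m) (xs a y : Fin m) (h1 : y ≠ xs) (h2 : y ≠ a) :
    gkey σ xs a y < (m : ℚ) := by
  rw [gkey_of_ne σ xs a y h1 h2]
  exact_mod_cast pos_lt σ y

lemma gkey_lt_top (σ : Pref m) (xs a y : Fin m) (hxa : xs ≠ a) (h1 : y ≠ xs) :
    gkey σ xs a y < gkey σ xs a xs := by
  rw [gkey_top]
  by_cases h2 : y = a
  · subst h2; rw [gkey_snd σ xs y hxa]; norm_num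
  · have := gkey_base_lt σ xs a y h1 h2; linarith

lemma gkey_lt_snd (σ : Pref m) (xs a y : Fin m) (hxa : xs ≠ a) (h1 : y ≠ xs) (h2 : y ≠ a) :
    gkey σ xs a y < gkey σ xs a a := by
  rw [gkey_snd σ xs a hxa]
  exact gkey_base_lt σ xs a y h1 h2

lemma gkey_inj (σ : Pref m) (xs a : Fin m) (hxa : xs ≠ a) :
    Function.Injective (gkey σ xs a) := by
  intro y z h
  by_contra hne
  by_cases hy1 : y = xs
  · subst hy1
    have := gkey_lt_top σ y a z hxa (fun hh => hne hh.symm)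
    rw [h] at this; exact lt_irrefl _ this
  by_cases hz1 : z = xs
  · subst hz1
    have := gkey_lt_top σ z a y hxa hy1
    rw [h] at this; exact lt_irrefl _ this
  by_cases hy2 : y = a
  · subst hy2
    have := gkey_lt_snd σ xs y z hxa hz1 (fun hh => hne hh.symm)
    rw [h] at this; exact lt_irrefl _ this
  by_cases hz2 : z = a
  · subst hz2
    have := gkey_lt_snd σ xs z y hxa hy1 hy2
    rw [h] at this; exact lt_irrefl _ this
  rw [gkey_of_ne σ xs a y hy1 hy2, gkey_of_ne σ xs a z hz1 hz2] at h
  exact hne (pos_inj σ (by exact_mod_cast h))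

lemma rank_gkey_top (σ : Pref m) (xs a : Fin m) (hxa : xs ≠ a) :
    rank (gkey σ xs a) xs = m - 1 := by
  have heq : (univ.filter fun z => gkey σ xs a z < gkey σ xs a xs) = univ.erase xs := by
    ext z
    simp only [mem_filter, mem_univ, true_and, mem_erase, and_true]
    constructor
    · intro h; rintro rfl; exact lt_irrefl _ h
    · intro hz; exact gkey_lt_top σ xs a z hxa hz
  rw [rank, heq, card_erase_of_mem (mem_univ xs), card_univ, Fintype.card_fin]

lemma rank_gkey_snd (σ : Pref m) (xs a : Fin m) (hxa : xs ≠ a) :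
    rank (gkey σ xs a) a = m - 2 := by
  have heq : (univ.filter fun z => gkey σ xs a z < gkey σ xs a a)
      = (univ.erase xs).erase a := by
    ext z
    simp only [mem_filter, mem_univ, true_and, mem_erase, and_true]
    constructor
    · intro h
      have hz2 : z ≠ a := by rintro rfl; exact lt_irrefl _ h
      have hz1 : z ≠ xs := by
        rintro rfl
        rw [gkey_top, gkey_snd σ z a hxa] at h; norm_num at h
      exact ⟨hz2, hz1⟩
    · rintro ⟨hz2, hz1⟩
      exact gkey_lt_snd σ xs a z hxa hz1 hz2
  have ha : a ∈ univ.erase xs := mem_erase.mpr ⟨Ne.symm hxa, mem_univ a⟩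
  rw [rank, heq, card_erase_of_mem ha, card_erase_of_mem (mem_univ xs), card_univ,
    Fintype.card_fin]
  omega

lemma gkey_lt_base (σ : Pref m) (xs a y z : Fin m) (h1 : y ≠ xs) (h2 : y ≠ a)
    (h : gkey σ xs a z < gkey σ xs a y) : z ≠ xs ∧ z ≠ a ∧ pos σ z < pos σ y := by
  rw [gkey_of_ne σ xs a y h1 h2] at h
  have hbound : (pos σ y : ℚ) < m := by exact_mod_cast pos_lt σ y
  have hz1 : z ≠ xs := by rintro rfl; rw [gkey_top] at h; linarith
  have hz2 : z ≠ a := by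
    rintro rfl
    rw [gkey_snd σ xs z (fun hh => hz1 hh.symm)] at h; linarith
  rw [gkey_of_ne σ xs a z hz1 hz2] at h
  exact ⟨hz1, hz2, by exact_mod_cast h⟩

lemma rank_gkey_le (σ : Pref m) (xs a y : Fin m) (h1 : y ≠ xs) (h2 : y ≠ a) :
    rank (gkey σ xs a) y ≤ pos σ y := by
  rw [pos_eq_card σ y, rank]
  apply card_le_card
  intro z hz
  rcases mem_filter.mp hz with ⟨_, hlt⟩
  obtain ⟨_, _, hp⟩ := gkey_lt_base σ xs a y z h1 h2 hlt
  exact mem_filter.mpr ⟨mem_univ z, hp⟩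

lemma rank_gkey_lt_snd (σ : Pref m) (xs a y : Fin m) (hxa : xs ≠ a)
    (h1 : y ≠ xs) (h2 : y ≠ a) (hm3 : 3 ≤ m) :
    rank (gkey σ xs a) y < m - 2 := by
  have hsub : (univ.filter fun z => gkey σ xs a z < gkey σ xs a y)
      ⊆ ((univ.erase xs).erase a).erase y := by
    intro z hz
    rcases mem_filter.mp hz with ⟨_, hlt⟩
    obtain ⟨hz1, hz2, hp⟩ := gkey_lt_base σ xs a y z h1 h2 hlt
    have hzy : z ≠ y := by rintro rfl; exact lt_irrefl _ hp
    exact mem_erase.mpr ⟨hzy, mem_erase.mpr ⟨hz2, mem_erase.mpr ⟨hz1, mem_univ z⟩⟩⟩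
  have hy : y ∈ (univ.erase xs).erase a :=
    mem_erase.mpr ⟨h2, mem_erase.mpr ⟨h1, mem_univ y⟩⟩
  have ha : a ∈ univ.erase xs := mem_erase.mpr ⟨Ne.symm hxa, mem_univ a⟩
  have hcard : #(((univ.erase xs).erase a).erase y) = m - 1 - 1 - 1 := by
    rw [card_erase_of_mem hy, card_erase_of_mem ha, card_erase_of_mem (mem_univ xs),
      card_univ, Fintype.card_fin]
  calc rank (gkey σ xs a) y ≤ m - 1 - 1 - 1 := hcard ▸ card_le_card hsub
    _ < m - 2 := by omega

lemma rank_gkey_lt_top (σ : Pref m) (xs a y : Fin m) (hxa : xs ≠ a)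
    (h1 : y ≠ xs) (hm2 : 2 ≤ m) :
    rank (gkey σ xs a) y < m - 1 := by
  have hsub : (univ.filter fun z => gkey σ xs a z < gkey σ xs a y)
      ⊆ (univ.erase xs).erase y := by
    intro z hz
    rcases mem_filter.mp hz with ⟨_, hlt⟩
    have hz1 : z ≠ xs := by
      rintro rfl
      have := gkey_lt_top σ z a y hxa h1
      exact lt_irrefl _ (lt_trans hlt this)
    have hzy : z ≠ y := by rintro rfl; exact lt_irrefl _ hlt
    exact mem_erase.mpr ⟨hzy, mem_erase.mpr ⟨hz1, mem_univ z⟩⟩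
  have hy : y ∈ univ.erase xs := mem_erase.mpr ⟨h1, mem_univ y⟩
  have hcard : #((univ.erase xs).erase y) = m - 1 - 1 := by
    rw [card_erase_of_mem hy, card_erase_of_mem (mem_univ xs), card_univ, Fintype.card_fin]
  calc rank (gkey σ xs a) y ≤ m - 1 - 1 := hcard ▸ card_le_card hsub
    _ < m - 1 := by omega

end S5


open S5 Finset

/-- Every N-maxmin rule is regret-free truth-telling. -/
theorem stmt_5 (n m : ℕ) (hn : 2 ≤ n) (hm : 2 ≤ m)
    (f : Profile n m → Fin m) (hf : NMaxmin f) :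
    RFTT f := by
  classical
  obtain ⟨j, hj⟩ := hf
  intro i P Pi' hman
  haveI : NeZero n := ⟨by omega⟩
  haveI : NeZero m := ⟨by omega⟩
  -- uniqueness of the winner
  have f_eq : ∀ (Q : Profile n m) (x : Fin m), (∀ y, minpos Q y ≤ minpos Q x) →
      (∀ y, (∀ z, minpos Q z ≤ minpos Q y) → y ≠ x → prefers (Q j) x y) → f Q = x := by
    intro Q x hx hbeat
    by_contra hne
    have h1 : prefers (Q j) (f Q) x := (hj Q).2 x hx (fun hh => hne hh.symm)
    have h2 : prefers (Q j) x (f Q) := hbeat (f Q) ((hj Q).1) hne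
    exact lt_asymm h1 h2
  set p : Pref m := P i with hp
  set a : Fin m := f P with ha
  set P' : Profile n m := Function.update P i Pi' with hP'
  set b : Fin m := f P' with hb
  have hman' : pos p a < pos p b := (prefers_iff p b a).mp hman
  have hba : b ≠ a := by intro hh; rw [hh] at hman'; exact lt_irrefl _ hman'
  have hP'i : P' i = Pi' := Function.update_self i Pi' P
  have hP'k : ∀ k, k ≠ i → P' k = P k := fun k hk => Function.update_of_ne hk Pi' P
  have F1 : ∀ x, minpos P x ≤ minpos P a := (hj P).1
  have F2 : ∀ y, (∀ z, minpos P z ≤ minpos P y) → y ≠ a → prefers (P j) a y :=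
    fun y hy hne => (hj P).2 y hy hne
  have F3a : ∀ x, minpos P' x ≤ minpos P' b := (hj P').1
  have F3b : ∀ y, (∀ z, minpos P' z ≤ minpos P' y) → y ≠ b → prefers (P' j) b y :=
    fun y hy hne => (hj P').2 y hy hne
  have hα0pa : minpos P a ≤ pos p a := minpos_le P i a
  -- Step 1 : pos p a ≥ 1
  have hpa1 : 1 ≤ pos p a := by
    by_contra h0
    have hpa0 : pos p a = 0 := by omega
    have hall : ∀ x, minpos P x = 0 := fun x =>
      Nat.le_antisymm (le_trans (F1 x) (by omega)) (Nat.zero_le _)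
    have htop : ∀ y, y ≠ a → prefers (P j) a y := fun y hy =>
      F2 y (fun z => by rw [hall z, hall y]) hy
    by_cases hji : j = i
    · -- a is the top of p, contradicting pos p a = 0
      subst hji
      set y := p ⟨m - 1, by omega⟩ with hy
      have hyv : pos p y = m - 1 := by simp [pos, hy]
      have hya : y ≠ a := by
        intro hh; rw [hh, hpa0] at hyv; omega
      have := (prefers_iff _ _ _).mp (htop y hya)
      rw [hyv, hpa0] at this; omega
    · -- the misreport still elects a
      have hfeq : f P' = a := by
        apply f_eq P' a
        · intro x
          by_cases hxa : x = a
          · subst hxa; exact le_refl _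
          · obtain ⟨k, hk⟩ := minpos_witness P x
            have hki : k ≠ i := by
              rintro rfl
              rw [hall x] at hk
              have : x = a := pos_inj p (by rw [← hk, hpa0])
              exact hxa this
            calc minpos P' x ≤ pos (P' k) x := minpos_le P' k x
              _ = pos (P k) x := by rw [hP'k k hki]
              _ = 0 := by rw [← hk, hall x]
              _ ≤ minpos P' a := Nat.zero_le _
        · intro y _ hy
          rw [hP'k j hji]
          exact htop y hy
      rw [← hb] at hfeq
      rw [hfeq] at hman'
      exact lt_irrefl _ hman'
  have hpam2 : pos p a ≤ m - 2 := by
    have h1 := pos_lt p b; omega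
  have hm3 : 3 ≤ m := by omega
  -- the set of alternatives worse than a, and the punisher xs
  set W : Finset (Fin m) := univ.filter (fun y => pos p y < pos p a) with hW
  have hWcard : W.card = pos p a := card_pos_lt p (pos p a) (le_of_lt (pos_lt p a))
  have hWne : W.Nonempty := by rw [← Finset.card_pos, hWcard]; omega
  obtain ⟨xs, hxsW, hxsmax⟩ := Finset.exists_max_image W (fun y => pos Pi' y) hWne
  have hxslt : pos p xs < pos p a := (Finset.mem_filter.mp hxsW).2
  have hxsa : xs ≠ a := by intro hh; rw [hh] at hxslt; exact lt_irrefl _ hxslt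
  -- the constructed subprofile
  set Q : Pref m → Profile n m := fun R k => if k = i then R else
      mkPref (gkey (P k) xs a) (gkey_inj (P k) xs a hxsa) with hQ
  have hQi : ∀ R, Q R i = R := fun R => by simp [hQ]
  have hQk : ∀ (R : Pref m) (y : Fin m) (k : Fin n), k ≠ i → pos (Q R k) y = rank (gkey (P k) xs a) y := by
    intro R y k hk
    simp [hQ, if_neg hk, pos_mkPref]

  have hkex : ∃ k : Fin n, k ≠ i := by
    by_cases h : i = ⟨0, by omega⟩
    · exact ⟨⟨1, by omega⟩, by rw [h]; intro hh; simpa using congrArg Fin.val hh⟩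
    · exact ⟨⟨0, by omega⟩, fun hh => h hh.symm⟩
  have Hxs : ∀ R : Pref m, minpos (Q R) xs = pos R xs := by
    intro R
    apply le_antisymm
    · have h := minpos_le (Q R) i xs; rwa [hQi R] at h
    · apply le_minpos
      intro k
      by_cases hk : k = i
      · subst hk; rw [hQi R]
      · rw [hQk R xs k hk, rank_gkey_top (P k) xs a hxsa]
        have := pos_lt R xs; omega
  have HaR : ∀ R : Pref m, minpos (Q R) a = min (pos R a) (m - 2) := by
    intro R
    obtain ⟨k0, hk0⟩ := hkex
    apply le_antisymm
    · apply le_min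
      · have h := minpos_le (Q R) i a; rwa [hQi R] at h
      · have h := minpos_le (Q R) k0 a
        rwa [hQk R a k0 hk0, rank_gkey_snd (P k0) xs a hxsa] at h
    · apply le_minpos
      intro k
      by_cases hk : k = i
      · subst hk; rw [hQi R]; exact min_le_left _ _
      · rw [hQk R a k hk, rank_gkey_snd (P k) xs a hxsa]; exact min_le_right _ _
  have HyR : ∀ (R : Pref m) (y : Fin m), minpos (Q R) y ≤ pos R y := by
    intro R y; have h := minpos_le (Q R) i y; rwa [hQi R] at h
  have HyP : ∀ (R : Pref m) (y : Fin m) (k : Fin n), k ≠ i → y ≠ xs → y ≠ a →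
      minpos (Q R) y ≤ pos (P k) y := by
    intro R y k hk h1 h2
    calc minpos (Q R) y ≤ pos (Q R k) y := minpos_le (Q R) k y
      _ = rank (gkey (P k) xs a) y := hQk R y k hk
      _ ≤ pos (P k) y := rank_gkey_le (P k) xs a y h1 h2
  have HL1 : ∀ (R : Pref m) (y : Fin m), y ≠ xs → y ≠ a → minpos P y < pos p y →
      minpos (Q R) y ≤ minpos P y := by
    intro R y h1 h2 hlt
    obtain ⟨k, hk⟩ := minpos_witness P y
    have hki : k ≠ i := by
      intro hh; rw [hh] at hk; rw [hk] at hlt; exact lt_irrefl _ hlt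
    rw [hk]; exact HyP R y k hki h1 h2
  have HL1p : ∀ y : Fin m, y ≠ xs → y ≠ a → minpos (Q p) y ≤ minpos P y := by
    intro y h1 h2
    rcases lt_or_eq_of_le (minpos_le P i y) with hlt | heq
    · exact HL1 p y h1 h2 hlt
    · rw [heq]; exact HyR p y
  have hQpa : minpos (Q p) a = pos p a := by
    rw [HaR p]; exact Nat.min_eq_left (by omega)
  -- truth-telling at the constructed profile elects a
  have htruth : f (Q p) = a := by
    apply f_eq (Q p) a
    · intro y
      rw [hQpa]
      by_cases h1 : y = xs
      · rw [h1, Hxs p]; omega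
      · by_cases h2 : y = a
        · rw [h2, hQpa]
        · calc minpos (Q p) y ≤ minpos P y := HL1p y h1 h2
            _ ≤ minpos P a := F1 y
            _ ≤ pos p a := hα0pa
    · intro y hy hne
      have hyxs : y ≠ xs := by
        intro hh; rw [hh] at hy
        have h := hy a; rw [hQpa, Hxs p] at h; omega
      by_cases hji : j = i
      · have hmem : ∀ z, minpos P z ≤ minpos P y := by
          intro z
          have h1 : pos p a ≤ minpos (Q p) y := by have h := hy a; rwa [hQpa] at h
          have h2 : minpos (Q p) y ≤ minpos P y := HL1p y hyxs hne
          exact le_trans (F1 z) (by omega)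
        have h := F2 y hmem hne
        rw [hji] at h ⊢
        rw [hQi p]
        exact h
      · rw [prefers_iff, hQk p y j hji, hQk p a j hji, rank_gkey_snd (P j) xs a hxsa]
        exact rank_gkey_lt_snd (P j) xs a y hxsa hyxs hne hm3
  refine ⟨Q p, hQi p, ?_, ?_⟩
  · rw [htruth]
  · have hupd : Function.update (Q p) i Pi' = Q Pi' := by
      funext k
      rw [Function.update_apply]
      by_cases hk : k = i
      · subst hk; simp [hQ]
      · simp [hQ, hk]
    rw [htruth, hupd, prefers_iff]
    set c : Fin m := f (Q Pi') with hc
    by_contra hcge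
    push_neg at hcge
    have hQm : ∀ y, minpos (Q Pi') y ≤ minpos (Q Pi') c := (hj (Q Pi')).1
    have hQtie : ∀ y, (∀ z, minpos (Q Pi') z ≤ minpos (Q Pi') y) → y ≠ c →
        prefers ((Q Pi') j) c y := fun y hy hne => (hj (Q Pi')).2 y hy hne
    have hcxs : c ≠ xs := by
      intro hh; rw [hh] at hcge; omega
    obtain ⟨γ, hγdef⟩ : ∃ g : ℕ, minpos (Q Pi') c = g := ⟨_, rfl⟩
    rw [hγdef] at hQm
    have hVγ : pos Pi' xs ≤ γ := by
      rw [← Hxs Pi']; exact hQm xs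
    by_cases hca : c = a
    · -- CASE II : the misreport profile elects a, impossible
      have hpa' : pos p a ≤ pos Pi' a := by
        by_contra hlt; push_neg at hlt
        have h2 : γ ≤ pos Pi' a := by
          rw [← hγdef, hca, HaR Pi']; exact min_le_left _ _
        have h1 : pos Pi' xs ≤ pos Pi' a := le_trans hVγ h2
        have hsub : W ⊆ univ.filter (fun y => pos Pi' y < pos Pi' a) := by
          intro y hy
          refine mem_filter.mpr ⟨mem_univ _, lt_of_le_of_ne (le_trans (hxsmax y hy) h1) ?_⟩
          intro hh
          have hya : y = a := pos_inj Pi' hh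
          rw [hW, hya] at hy
          exact lt_irrefl _ (mem_filter.mp hy).2
        have hcard := card_le_card hsub
        rw [hWcard, card_pos_lt Pi' (pos Pi' a) (le_of_lt (pos_lt Pi' a))] at hcard
        omega
      have h2 : minpos P a ≤ minpos P' a := by
        apply le_minpos
        intro k
        by_cases hk : k = i
        · subst hk; rw [hP'i]; omega
        · rw [hP'k k hk]; exact minpos_le P k a
      obtain ⟨kb, hkb⟩ := minpos_witness P b
      have hkbi : kb ≠ i := by
        intro hh; rw [hh] at hkb
        have h3 : minpos P b ≤ pos p a := le_trans (F1 b) hα0pa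
        rw [hkb, ← hp] at h3
        omega
      have hβα0 : minpos P' b ≤ minpos P a := by
        calc minpos P' b ≤ pos (P' kb) b := minpos_le P' kb b
          _ = pos (P kb) b := by rw [hP'k kb hkbi]
          _ = minpos P b := hkb.symm
          _ ≤ minpos P a := F1 b
      have h4 : minpos P' a = minpos P' b := le_antisymm (F3a a) (le_trans hβα0 h2)
      have h5 : minpos P a ≤ minpos P b := by
        apply le_minpos
        intro k
        by_cases hk : k = i
        · subst hk; rw [← hp]; omega
        · rw [← hP'k k hk]
          calc minpos P a ≤ minpos P' a := h2
            _ = minpos P' b := h4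
            _ ≤ pos (P' k) b := minpos_le P' k b
      have hF2b := (prefers_iff _ _ _).mp (F2 b (fun z => le_trans (F1 z) h5) hba)
      by_cases hji : j = i
      · rw [hji, ← hp] at hF2b; omega
      · have hF3b := (prefers_iff _ _ _).mp
          (F3b a (fun z => le_trans (F3a z) h4.ge) (fun hh => hba hh.symm))
        rw [hP'k j hji] at hF3b
        omega
    · -- CASE I : the misreport winner is some other alternative above a, impossible
      have hcgt : pos p a < pos p c := by
        rcases lt_or_eq_of_le hcge with h | h
        · exact h
        · exact absurd (pos_inj p h).symm hca
      have hmPc : minpos P c < pos p c := lt_of_le_of_lt (le_trans (F1 c) hα0pa) hcgt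
      have hγα0 : γ ≤ minpos P a := by
        rw [← hγdef]; exact le_trans (HL1 Pi' c hcxs hca hmPc) (F1 c)
      have hγpa : γ ≤ pos p a := le_trans hγα0 hα0pa
      have hPcγ : γ ≤ minpos P c := by
        apply le_minpos
        intro k
        by_cases hk : k = i
        · subst hk; rw [← hp]; omega
        · calc γ ≤ pos (Q Pi' k) c := hγdef ▸ minpos_le (Q Pi') k c
            _ = rank (gkey (P k) xs a) c := hQk Pi' c k hk
            _ ≤ pos (P k) c := rank_gkey_le (P k) xs a c hcxs hca
      by_cases hIA : pos Pi' a ≤ γ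
      · -- Case I.A
        have hTsub : insert a W ⊆ univ.filter (fun y => pos Pi' y < γ + 1) := by
          intro y hy
          rcases mem_insert.mp hy with hya | hyW
          · rw [hya]; exact mem_filter.mpr ⟨mem_univ _, by omega⟩
          · refine mem_filter.mpr ⟨mem_univ _, ?_⟩
            have h := le_trans (hxsmax y hyW) hVγ; omega
        have hTcard : #(univ.filter (fun y => pos Pi' y < γ + 1))
            = γ + 1 := card_pos_lt Pi' _ (by omega)
        have haW : a ∉ W := by
          intro hh; rw [hW] at hh; exact lt_irrefl _ (mem_filter.mp hh).2
        have hins : #(insert a W) = pos p a + 1 := by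
          rw [card_insert_of_notMem haW, hWcard]
        have hle := card_le_card hTsub
        rw [hins, hTcard] at hle
        have hγeq : γ = pos p a := le_antisymm hγpa (by omega)
        have hPc : ∀ z, minpos P z ≤ minpos P c := fun z =>
          le_trans (F1 z) (by omega)
        have hF2c := (prefers_iff _ _ _).mp (F2 c hPc hca)
        by_cases hji : j = i
        · rw [hji, ← hp] at hF2c; omega
        · have hγm : γ < m := by omega
          have hy0pos : pos Pi' (Pi' ⟨γ, hγm⟩) = γ := by
            simp [pos]
          have hy0T : Pi' ⟨γ, hγm⟩ ∈ insert a W := by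
            by_contra hnot
            have hsub2 : insert (Pi' ⟨γ, hγm⟩) (insert a W)
                ⊆ univ.filter (fun y => pos Pi' y < γ + 1) := by
              intro y hy
              rcases mem_insert.mp hy with hyy | hy2
              · rw [hyy]; exact mem_filter.mpr ⟨mem_univ _, by omega⟩
              · exact hTsub hy2
            have hcard2 := card_le_card hsub2
            rw [card_insert_of_notMem hnot, hins, hTcard] at hcard2
            omega
          rcases mem_insert.mp hy0T with hy0a | hy0W
          · rw [hy0a] at hy0pos
            have hamem : ∀ z, minpos (Q Pi') z ≤ minpos (Q Pi') a := by
              intro z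
              have hQa : minpos (Q Pi') a = γ := by
                rw [HaR Pi', hy0pos]; exact Nat.min_eq_left (by omega)
              rw [hQa]; exact hQm z
            have h := (prefers_iff _ _ _).mp (hQtie a hamem (fun hh => hca hh.symm))
            rw [hQk Pi' a j hji, hQk Pi' c j hji, rank_gkey_snd (P j) xs a hxsa] at h
            have hrc := rank_gkey_lt_snd (P j) xs a c hxsa hcxs hca hm3
            omega
          · have hVeq : pos Pi' xs = γ := by
              have h := hxsmax _ hy0W; rw [hy0pos] at h; omega
            have hxmem : ∀ z, minpos (Q Pi') z ≤ minpos (Q Pi') xs := by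
              intro z; rw [Hxs Pi', hVeq]; exact hQm z
            have h := (prefers_iff _ _ _).mp (hQtie xs hxmem (fun hh => hcxs hh.symm))
            rw [hQk Pi' xs j hji, hQk Pi' c j hji, rank_gkey_top (P j) xs a hxsa] at h
            have hrc := rank_gkey_lt_top (P j) xs a c hxsa hcxs (by omega)
            omega
      · -- Case I.B
        push_neg at hIA
        have hQa' : minpos (Q Pi') a ≤ γ := hQm a
        rw [HaR Pi'] at hQa'
        have hminsplit : min (pos Pi' a) (m - 2) = pos Pi' a ∨
            min (pos Pi' a) (m - 2) = m - 2 := min_cases _ _ |>.imp (fun h => h.1) (fun h => h.1)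
        have hγm2 : γ = m - 2 := by omega
        have hpaeq : pos p a = m - 2 := by omega
        have hα0eq : minpos P a = m - 2 := by omega
        have hpia : pos Pi' a = m - 1 := by have := pos_lt Pi' a; omega
        have hpcv : pos p c = m - 1 := by have := pos_lt p c; omega
        have hpbv : pos p b = m - 1 := by have := pos_lt p b; omega
        have hbc : b = c := pos_inj p (by rw [hpbv, hpcv])
        have h1c : γ ≤ pos Pi' c := hγdef ▸ HyR Pi' c
        have h2c : pos Pi' c ≠ m - 1 := by
          intro hh
          exact hca (pos_inj Pi' (by rw [hh, hpia]))
        have h3c := pos_lt Pi' c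
        have hpic : pos Pi' c = m - 2 := by omega
        have h6 : minpos P' c ≤ m - 2 := by
          have h := minpos_le P' i c; rw [hP'i] at h; omega
        have h7 : m - 2 ≤ minpos P' a := by
          apply le_minpos; intro k
          by_cases hk : k = i
          · subst hk; rw [hP'i]; omega
          · rw [hP'k k hk]
            calc m - 2 = minpos P a := hα0eq.symm
              _ ≤ pos (P k) a := minpos_le P k a
        have hb6 : minpos P' b ≤ m - 2 := by rw [hbc]; exact h6
        have h8 : minpos P' a = minpos P' b := le_antisymm (F3a a) (by omega)
        have hF3b := (prefers_iff _ _ _).mp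
          (F3b a (fun z => le_trans (F3a z) h8.ge) (fun hh => hba hh.symm))
        have hPc : ∀ z, minpos P z ≤ minpos P c := fun z => le_trans (F1 z) (by omega)
        have hF2c := (prefers_iff _ _ _).mp (F2 c hPc hca)
        by_cases hji : j = i
        · rw [hji, ← hp] at hF2c; omega
        · rw [hP'k j hji, hbc] at hF3b
          omega
end

section
/- An A-scoring rule whose scores satisfy s_1 < s_2 = ⋯ = s_m (i.e. k* = 1; an A-negative-plurality rule) is regret-free truth-telling if and only if n ≥ m − 1. -/
open Function

/-!
With scores `s₁ < s₂ = ⋯ = s_m` the scoring winners are the alternatives vetoed (ranked last)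
by the fewest agents, so an agent influences the outcome only through his veto, and a profitable
misreport has to veto the current winner `a`.

If `m - 1 ≤ n`, the other agents can together veto every alternative except `a` and the agent's
worst alternative `x`: then the truth elects `a` while the misreport leaves `x` as the only
unvetoed alternative, so the agent regrets it.

If `n < m - 1`, let every agent rank the tie-break-last alternative `x` at the bottom and the
tie-break-first other alternative `a` just above it; vetoing `a` instead pays off. At any profile
where the truth elects `a`, the `n` vetoes leave some alternative other than `a` and `x`
unvetoed; it stays unvetoed after the misreport and wins the tie against `x`, which is the only
outcome worse than `a`. So the misreport is never regretted.
-/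

open Finset

lemma exists_mem_forall_ne_rel {α : Type*} [Finite α] (r : α → α → Prop)
    [IsStrictTotalOrder α r] {s : Set α} (hs : s.Nonempty) :
    ∃ w ∈ s, ∀ y ∈ s, y ≠ w → r w y := by
  obtain ⟨w, hw, hmin⟩ := (Finite.wellFounded_of_trans_of_irrefl r).has_min s hs
  exact ⟨w, hw, fun y hy hne =>
    ((trichotomous_of r w y).resolve_right (not_or.mpr ⟨hne.symm, hmin y hy⟩))⟩

lemma exists_pref_bottom_two {m : ℕ} [NeZero m] {x a : Fin m} (hxa : x ≠ a) :
    ∃ p : Pref m, p 0 = x ∧ (∀ y, prefers p a y ↔ y = x) ∧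
      ∀ y, y ≠ x → y ≠ a → prefers p y a := by
  have hm : 1 < m := Fin.nontrivial_iff_two_le.mp ⟨⟨x, a, hxa⟩⟩
  have h1 : ((1 : Fin m) : ℕ) = 1 := Nat.mod_eq_of_lt hm
  set σ : Pref m := Equiv.swap 0 x
  have hσ1 : σ 1 ≠ x := fun h => by
    have := congrArg Fin.val (σ.injective (h.trans (Equiv.swap_apply_left 0 x).symm))
    rw [h1, Fin.val_zero] at this
    omega
  set p : Pref m := σ.trans (Equiv.swap (σ 1) a)
  have hp0 : p.symm x = 0 := by
    simp [p, σ, Equiv.swap_apply_of_ne_of_ne hσ1.symm hxa]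
  have hp1 : p.symm a = 1 := by simp [p]
  refine ⟨p, ((Equiv.symm_apply_eq p).mp hp0).symm, fun y => ?_, fun y hyx hya => ?_⟩
  · rw [prefers, hp1, ← p.symm.injective.eq_iff (a := y), hp0, Fin.lt_def, Fin.ext_iff, h1,
      Fin.val_zero]
    omega
  · have h0 : (p.symm y : ℕ) ≠ 0 := fun h =>
      hyx (p.symm.injective (Fin.ext (by simp [hp0, h])))
    have h1' : (p.symm y : ℕ) ≠ 1 := fun h =>
      hya (p.symm.injective (Fin.ext (by rw [hp1, h, h1])))
    rw [prefers, hp1, Fin.lt_def, h1]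
    omega

lemma exists_surjective_subtype_ne {n m : ℕ} (i : Fin n) {a x : Fin m} (hax : a ≠ x)
    {b : Fin m} (hb : b ≠ a ∧ b ≠ x) (hnm : m - 1 ≤ n) :
    ∃ g : {j // j ≠ i} → {y // y ≠ a ∧ y ≠ x}, Function.Surjective g := by
  have : Nonempty {y // y ≠ a ∧ y ≠ x} := ⟨⟨b, hb⟩⟩
  have hcard : Fintype.card {y // y ≠ a ∧ y ≠ x} ≤ Fintype.card {j // j ≠ i} := by
    have hc : (univ.filter fun y => y ≠ a ∧ y ≠ x) = ({a, x} : Finset (Fin m))ᶜ := by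
      ext; simp
    rw [Fintype.card_subtype_compl, Fintype.card_subtype, hc, card_compl, card_pair hax]
    simp only [Fintype.card_fin, Fintype.card_unique]
    omega
  obtain ⟨e⟩ := Function.Embedding.nonempty_of_card_le hcard
  exact ⟨Function.invFun e, Function.invFun_surjective e.injective⟩

namespace NegPlurality

variable {n m : ℕ} [NeZero m]

def vetoes (P : Profile n m) (y : Fin m) : ℕ := #{i | P i 0 = y}

def vetoWinners (P : Profile n m) : Set (Fin m) := {y | ∀ z, vetoes P y ≤ vetoes P z}

/-- The A-negative-plurality rule with tie-breaking order `r`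
(`r x y`: `x` wins a tie with `y`). -/
def IsVetoRule (r : Fin m → Fin m → Prop) (f : Profile n m → Fin m) : Prop :=
  ∀ P, f P ∈ vetoWinners P ∧ ∀ y ∈ vetoWinners P, y ≠ f P → r (f P) y

lemma vetoes_eq_zero_iff {P : Profile n m} {y : Fin m} : vetoes P y = 0 ↔ ∀ j, P j 0 ≠ y := by
  simp [vetoes, filter_eq_empty_iff]

lemma vetoes_update_le (P : Profile n m) (i : Fin n) {q : Pref m} {y : Fin m} (hy : q 0 ≠ y) :
    vetoes (update P i q) y ≤ vetoes P y := by
  refine card_le_card (monotone_filter_right _ fun j _ hj => ?_)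
  rcases eq_or_ne j i with rfl | hji
  · exact absurd (by simpa using hj) hy
  · simpa [update_of_ne hji] using hj

lemma score_eq {s : Fin m → ℝ} {c : ℝ} (hs : ∀ k, k ≠ 0 → s k = c) (P : Profile n m)
    (y : Fin m) : score s P y = n * c - (c - s 0) * vetoes P y := by
  have hsk : ∀ i, s ((P i).symm y) = c - (c - s 0) * if P i 0 = y then 1 else 0 := fun i => by
    split_ifs with hk
    · rw [← hk, Equiv.symm_apply_apply]; ring
    · rw [hs _ fun h => hk (by rw [← h, Equiv.apply_symm_apply])]; ring
  rw [score, sum_congr rfl fun i _ => hsk i, sum_sub_distrib, ← mul_sum, sum_boole]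
  simp [vetoes, mul_comm]

lemma scoreSet_eq_vetoWinners {s : Fin m → ℝ} {c : ℝ} (hlt : s 0 < c)
    (hs : ∀ k, k ≠ 0 → s k = c) (P : Profile n m) : ScoreSet s P = vetoWinners P := by
  ext y
  simp only [ScoreSet, vetoWinners, Set.mem_ofPred_eq, score_eq hs, sub_le_sub_iff_left,
    mul_le_mul_iff_right₀ (sub_pos.mpr hlt), Nat.cast_le]

lemma mem_vetoWinners_of_vetoes_eq_zero {P : Profile n m} {y : Fin m} (hy : vetoes P y = 0) :
    y ∈ vetoWinners P :=
  fun _ => hy ▸ Nat.zero_le _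

lemma mem_vetoWinners_of_le {P : Profile n m} {w y : Fin m} (hw : w ∈ vetoWinners P)
    (h : vetoes P y ≤ vetoes P w) : y ∈ vetoWinners P :=
  fun z => h.trans (hw z)

lemma vetoes_eq_zero_of_mem_vetoWinners {P : Profile n m} {y z : Fin m}
    (hy : y ∈ vetoWinners P) (hz : vetoes P z = 0) : vetoes P y = 0 :=
  Nat.le_zero.mp (hz ▸ hy z)

lemma exists_ne_vetoes_eq_zero (hnm : n + 1 < m) (P : Profile n m) (a : Fin m) :
    ∃ z, z ≠ a ∧ vetoes P z = 0 := by
  have hcard : #(insert a (univ.image fun j => P j 0)) < #(univ : Finset (Fin m)) :=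
    calc #(insert a (univ.image fun j => P j 0)) ≤ #(univ.image fun j => P j 0) + 1 :=
          card_insert_le _ _
      _ ≤ n + 1 := by simpa using card_image_le (s := (univ : Finset (Fin n)))
      _ < #(univ : Finset (Fin m)) := by simpa using hnm
  obtain ⟨z, -, hz⟩ := exists_mem_notMem_of_card_lt_card hcard
  simp only [mem_insert, mem_image, mem_univ, true_and, not_or, not_exists] at hz
  exact ⟨z, hz.1, vetoes_eq_zero_iff.mpr hz.2⟩

namespace IsVetoRule

variable {r : Fin m → Fin m → Prop} {f : Profile n m → Fin m}

lemma eq_of_forall_rel [Std.Asymm r] (hf : IsVetoRule r f) {P : Profile n m} {w : Fin m}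
    (hw : w ∈ vetoWinners P) (hmax : ∀ y ∈ vetoWinners P, y ≠ w → r w y) : f P = w := by
  by_contra hne
  exact asymm ((hf P).2 w hw (Ne.symm hne)) (hmax _ (hf P).1 hne)

lemma eq_of_mem_vetoWinners [Std.Asymm r] (hf : IsVetoRule r f) {P P' : Profile n m}
    (h : f P ∈ vetoWinners P') (h' : f P' ∈ vetoWinners P) : f P = f P' := by
  by_contra hne
  exact asymm ((hf P).2 _ h' (Ne.symm hne)) ((hf P').2 _ h hne)

lemma congr_bottom [Std.Asymm r] (hf : IsVetoRule r f) {P P' : Profile n m}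
    (h : ∀ j, P j 0 = P' j 0) : f P = f P' := by
  have hv : vetoes P = vetoes P' := by ext y; simp [vetoes, h]
  have hW : vetoWinners P = vetoWinners P' := by simp [vetoWinners, hv]
  exact hf.eq_of_mem_vetoWinners (hW ▸ (hf P).1) (hW ▸ (hf P').1)

lemma eq_of_update [Std.Asymm r] (hf : IsVetoRule r f) (P : Profile n m) (i : Fin n)
    (q : Pref m) (hb : f (update P i q) ≠ P i 0) (ha : f P ≠ q 0) :
    f (update P i q) = f P := by
  set P' := update P i q
  have hback : update P' i (P i) = P := by simp [P']
  have h₁ : vetoes P (f P') ≤ vetoes P' (f P') := by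
    simpa only [hback] using vetoes_update_le P' i (Ne.symm hb)
  have h₂ := (hf P').1 (f P)
  have h₃ : vetoes P' (f P) ≤ vetoes P (f P) := vetoes_update_le P i (Ne.symm ha)
  have h₄ := (hf P).1 (f P')
  exact hf.eq_of_mem_vetoWinners (mem_vetoWinners_of_le (hf P).1 (by omega))
    (mem_vetoWinners_of_le (hf P').1 (by omega))

lemma eq_of_unique_unvetoed (hf : IsVetoRule r f) {P : Profile n m} {a : Fin m}
    (ha : ∀ j, P j 0 ≠ a) (hy : ∀ y, y ≠ a → ∃ j, P j 0 = y) : f P = a := by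
  by_contra hne
  obtain ⟨j, hj⟩ := hy _ hne
  exact vetoes_eq_zero_iff.mp
    (vetoes_eq_zero_of_mem_vetoWinners (hf P).1 (vetoes_eq_zero_iff.mpr ha)) j hj

lemma eq_of_vetoes_cover (hf : IsVetoRule r f) {Q : Profile n m} {i : Fin n} {c d : Fin m}
    (hcd : c ≠ d) (hi : Q i 0 = c) (hothers : ∀ j, j ≠ i → Q j 0 ≠ c ∧ Q j 0 ≠ d)
    (hcover : ∀ y, y ≠ c → y ≠ d → ∃ j, Q j 0 = y) : f Q = d := by
  refine hf.eq_of_unique_unvetoed (fun j => ?_) fun y hyd => ?_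
  · rcases eq_or_ne j i with rfl | hji
    · exact hi ▸ hcd
    · exact (hothers j hji).2
  · rcases eq_or_ne y c with rfl | hyc
    · exact ⟨i, hi⟩
    · exact hcover y hyc hyd

theorem rftt [Std.Asymm r] (hf : IsVetoRule r f) (hnm : m - 1 ≤ n) : RFTT f := by
  intro i P q himp
  set a := f P
  set x := P i 0
  set b := f (update P i q)
  have hbx : b ≠ x := fun h => by simp [prefers, b, h, x] at himp
  have hba : b ≠ a := fun h => lt_irrefl _ (h ▸ himp : prefers (P i) a a)
  have hqa : q 0 = a := by
    by_contra h
    exact hba (hf.eq_of_update P i q hbx (Ne.symm h))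
  have hax : a ≠ x := fun h => hba <| hf.congr_bottom fun j => by
    rcases eq_or_ne j i with rfl | hji
    · simp [hqa, h, x]
    · simp [update_of_ne hji]
  obtain ⟨g, hg⟩ := exists_surjective_subtype_ne i hax ⟨hba, hbx⟩ hnm
  set Ps : Profile n m := fun j => if h : j = i then P i else Equiv.swap 0 (g ⟨j, h⟩)
  have hPs : ∀ j (h : j ≠ i), Ps j 0 = g ⟨j, h⟩ := fun j h => by simp [Ps, h]
  have hcover : ∀ y, y ≠ a → y ≠ x → ∃ j, j ≠ i ∧ Ps j 0 = y := fun y hya hyx =>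
    let ⟨⟨j, hj⟩, hgj⟩ := hg ⟨y, hya, hyx⟩
    ⟨j, hj, (hPs j hj).trans (congrArg Subtype.val hgj)⟩
  have hPsi : Ps i = P i := dif_pos rfl
  have hfPs : f Ps = a := hf.eq_of_vetoes_cover hax.symm (by rw [hPsi])
    (fun j hj => by rw [hPs j hj]; exact (g _).2.symm)
    fun y hyx hya => (hcover y hya hyx).imp fun _ => And.right
  have hfQs : f (update Ps i q) = x := hf.eq_of_vetoes_cover hax (by rw [update_self, hqa])
    (fun j hj => by rw [update_of_ne hj, hPs j hj]; exact (g _).2)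
    fun y hya hyx => (hcover y hya hyx).imp fun j hj => by rw [update_of_ne hj.1]; exact hj.2
  refine ⟨Ps, hPsi, hfPs, ?_⟩
  change (P i).symm (f (update Ps i q)) < (P i).symm (f Ps)
  rw [hfPs, hfQs, Equiv.symm_apply_apply]
  exact Fin.pos_iff_ne_zero.mpr fun h => hax ((Equiv.symm_apply_eq _).mp h)

theorem not_rftt [IsStrictTotalOrder (Fin m) r] (hf : IsVetoRule r f) (hn : 2 ≤ n)
    (hnm : n + 1 < m) : ¬ RFTT f := by
  intro hR
  obtain ⟨x, -, hx⟩ :=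
    exists_mem_forall_ne_rel (Function.swap r) (Set.univ_nonempty (α := Fin m))
  have : Nontrivial (Fin m) := Fin.nontrivial_iff_two_le.mpr (by omega)
  obtain ⟨a, hax, ha⟩ := exists_mem_forall_ne_rel r (exists_ne x)
  obtain ⟨p, hp0, hpa, hpb⟩ := exists_pref_bottom_two (Ne.symm hax)
  set i : Fin n := ⟨0, by omega⟩
  set j : Fin n := ⟨1, by omega⟩
  have hji : j ≠ i := by simp [i, j, Fin.ext_iff]
  set P : Profile n m := fun _ => p
  set q : Pref m := Equiv.swap 0 a
  have hq0 : q 0 = a := Equiv.swap_apply_left 0 a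
  have hPa : vetoes P a = 0 := vetoes_eq_zero_iff.mpr fun _ => hp0 ▸ Ne.symm hax
  have hfP : f P = a := hf.eq_of_forall_rel (mem_vetoWinners_of_vetoes_eq_zero hPa)
    fun y hy hya => ha y (fun hyx => vetoes_eq_zero_iff.mp
      (vetoes_eq_zero_of_mem_vetoWinners hy hPa) i (hp0.trans hyx.symm)) hya
  set b := f (update P i q)
  have hb : vetoes (update P i q) b = 0 :=
    let ⟨_, _, hz⟩ := exists_ne_vetoes_eq_zero hnm (update P i q) a
    vetoes_eq_zero_of_mem_vetoWinners (hf _).1 hz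
  have hbx : b ≠ x := fun h => vetoes_eq_zero_iff.mp hb j (by simp [update_of_ne hji, P, hp0, h])
  have hba : b ≠ a := fun h => vetoes_eq_zero_iff.mp hb i (by simp [hq0, h])
  obtain ⟨Ps, hPsi, hfPs, hregret⟩ := hR i P q (hfP ▸ hpb b hbx hba)
  have hfQs : f (update Ps i q) = x := (hpa _).mp (by rwa [hfPs, hfP] at hregret)
  obtain ⟨z, hza, hz⟩ := exists_ne_vetoes_eq_zero hnm Ps a
  have hzx : z ≠ x := fun h => vetoes_eq_zero_iff.mp hz i (by rw [hPsi, h]; exact hp0)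
  have hzQs : z ∈ vetoWinners (update Ps i q) := mem_vetoWinners_of_vetoes_eq_zero
    (Nat.le_zero.mp (hz ▸ vetoes_update_le Ps i (hq0.trans_ne hza.symm)))
  exact asymm (hx z trivial hzx) (hfQs ▸ (hf _).2 z hzQs (hfQs ▸ hzx))

end IsVetoRule

end NegPlurality

/-- An A-scoring rule whose scores satisfy s₁ < s₂ = ⋯ = s_m (k* = 1, i.e.
an A-negative-plurality rule) is regret-free truth-telling if and only if n ≥ m − 1. -/
theorem stmt_6 (n m : ℕ) (hn : 2 ≤ n) (hm : 2 ≤ m) (s : Fin m → ℝ)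
    (h1 : s ⟨0, by omega⟩ < s ⟨1, by omega⟩)
    (hconst : ∀ j : Fin m, 1 ≤ (j : ℕ) → s j = s ⟨m - 1, by omega⟩)
    (f : Profile n m → Fin m) (hf : AScoring s f) :
    RFTT f ↔ m - 1 ≤ n := by
  have : NeZero m := ⟨by omega⟩
  obtain ⟨r, hr, hfr⟩ := hf
  have hs : ∀ k : Fin m, k ≠ 0 → s k = s ⟨m - 1, by omega⟩ := fun k hk =>
    hconst k (Nat.one_le_iff_ne_zero.mpr (Fin.val_ne_zero_iff.mpr hk))
  have hlt : s 0 < s ⟨m - 1, by omega⟩ := hconst ⟨1, by omega⟩ le_rfl ▸ h1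
  have hveto : NegPlurality.IsVetoRule r f := fun P =>
    NegPlurality.scoreSet_eq_vetoWinners hlt hs P ▸ hfr P
  exact ⟨fun hR => by_contra fun h => hveto.not_rftt hn (by omega) hR, hveto.rftt⟩
end

section
/- Assume n > 2 and m ≥ 3. No A-scoring rule whose scores satisfy s_{m−1} < s_m (i.e. k* = m − 1) is regret-free truth-telling. -/
open Function

-- mk3 machinery
def mkB {m : ℕ} (p1 p2 u v : Fin m) : Equiv.Perm (Fin m) :=
  (Equiv.swap p1 u).trans (Equiv.swap ((Equiv.swap p1 u) p2) v)

def mk3 {m : ℕ} (p1 p2 p3 u v w : Fin m) : Equiv.Perm (Fin m) :=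
  (mkB p1 p2 u v).trans (Equiv.swap ((mkB p1 p2 u v) p3) w)

lemma mkB_p1 {m : ℕ} {p1 p2 u v : Fin m} (h12 : p1 ≠ p2) (huv : u ≠ v) :
    mkB p1 p2 u v p1 = u := by
  have h1 : (Equiv.swap p1 u) p1 = u := Equiv.swap_apply_left _ _
  have hne : (Equiv.swap p1 u) p2 ≠ u := fun h => h12 (((Equiv.swap p1 u).injective (h1.trans h.symm)))
  simp only [mkB, Equiv.trans_apply, h1]
  exact Equiv.swap_apply_of_ne_of_ne (Ne.symm hne) huv

lemma mkB_p2 {m : ℕ} (p1 p2 u v : Fin m) : mkB p1 p2 u v p2 = v := by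
  simp only [mkB, Equiv.trans_apply]
  exact Equiv.swap_apply_left _ _

lemma mk3_p1 {m : ℕ} {p1 p2 p3 u v w : Fin m} (h12 : p1 ≠ p2) (h13 : p1 ≠ p3)
    (huv : u ≠ v) (huw : u ≠ w) : mk3 p1 p2 p3 u v w p1 = u := by
  have h1 : mkB p1 p2 u v p1 = u := mkB_p1 h12 huv
  have hne : (mkB p1 p2 u v) p3 ≠ u := fun h => h13 (((mkB p1 p2 u v).injective (h1.trans h.symm)))
  simp only [mk3, Equiv.trans_apply, h1]
  exact Equiv.swap_apply_of_ne_of_ne hne.symm huw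

lemma mk3_p2 {m : ℕ} {p1 p2 p3 u v w : Fin m} (h23 : p2 ≠ p3) (hvw : v ≠ w) :
    mk3 p1 p2 p3 u v w p2 = v := by
  have h1 : mkB p1 p2 u v p2 = v := mkB_p2 _ _ _ _
  have hne : (mkB p1 p2 u v) p3 ≠ v := fun h => h23 (((mkB p1 p2 u v).injective (h1.trans h.symm)))
  simp only [mk3, Equiv.trans_apply, h1]
  exact Equiv.swap_apply_of_ne_of_ne hne.symm hvw

lemma mk3_p3 {m : ℕ} (p1 p2 p3 u v w : Fin m) : mk3 p1 p2 p3 u v w p3 = w := by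
  simp only [mk3, Equiv.trans_apply]
  exact Equiv.swap_apply_left _ _

lemma mk3_symm_u {m : ℕ} {p1 p2 p3 u v w : Fin m} (h12 : p1 ≠ p2) (h13 : p1 ≠ p3)
    (huv : u ≠ v) (huw : u ≠ w) : (mk3 p1 p2 p3 u v w).symm u = p1 := by
  rw [Equiv.symm_apply_eq, mk3_p1 h12 h13 huv huw]

lemma mk3_symm_v {m : ℕ} {p1 p2 p3 u v w : Fin m} (h23 : p2 ≠ p3) (hvw : v ≠ w) :
    (mk3 p1 p2 p3 u v w).symm v = p2 := by
  rw [Equiv.symm_apply_eq, mk3_p2 h23 hvw]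

lemma mk3_symm_w {m : ℕ} (p1 p2 p3 u v w : Fin m) :
    (mk3 p1 p2 p3 u v w).symm w = p3 := by
  rw [Equiv.symm_apply_eq, mk3_p3]

-- sums
lemma sum_neg_one_pow (k : ℕ) :
    ∑ i ∈ Finset.range k, ((-1 : ℝ)) ^ i = if Even k then 0 else 1 := by
  induction k with
  | zero => simp
  | succ k ih =>
    rw [Finset.sum_range_succ, ih]
    rcases Nat.even_or_odd k with h | h
    · rw [if_pos h, if_neg (by rw [Nat.even_add_one]; exact not_not_intro h), h.neg_one_pow]
      ring
    · have hne : ¬ Even k := Nat.not_even_iff_odd.mpr h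
      rw [if_neg hne, if_pos (Nat.even_add_one.mpr hne), h.neg_one_pow]; ring

lemma sum_alt_Ico {k : ℕ} (h : 3 ≤ k) :
    ∑ i ∈ Finset.Ico 3 k, ((-1 : ℝ)) ^ (i + 1) = if Even k then 1 else 0 := by
  rw [Finset.sum_Ico_eq_sub _ h]
  have e : ∀ S : Finset ℕ, ∑ i ∈ S, ((-1:ℝ))^(i+1) = (-1) * ∑ i ∈ S, ((-1:ℝ))^i := by
    intro S; rw [Finset.mul_sum]; exact Finset.sum_congr rfl fun i _ => by rw [pow_succ]; ring
  rw [e, e, sum_neg_one_pow, sum_neg_one_pow]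
  have h3 : ¬ Even 3 := by decide
  rcases Nat.even_or_odd k with h | h
  · rw [if_pos h, if_pos h, if_neg h3]; ring
  · have hne : ¬ Even k := Nat.not_even_iff_odd.mpr h
    rw [if_neg hne, if_neg hne, if_neg h3]; ring

lemma score_eq_sum_range {n m : ℕ} (s : Fin m → ℝ) (Pw : ℕ → Pref m) (x : Fin m) :
    score s (fun i : Fin n => Pw i.val) x = ∑ i ∈ Finset.range n, s ((Pw i).symm x) :=
  Fin.sum_univ_eq_sum_range (fun i => s ((Pw i).symm x)) n

lemma score_update {n m : ℕ} (s : Fin m → ℝ) (P : Profile n m) (i : Fin n) (p' : Pref m)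
    (x : Fin m) :
    score s (update P i p') x = score s P x - s ((P i).symm x) + s (p'.symm x) := by
  unfold score
  have h : ∀ j, s (((update P i p') j).symm x)
      = update (fun j => s ((P j).symm x)) i (s (p'.symm x)) j :=
    fun j => Function.apply_update (fun _ p => s ((p : Pref m).symm x)) P i p' j
  rw [Finset.sum_congr rfl (fun j _ => h j),
    Finset.sum_update_of_mem (Finset.mem_univ i),
    Finset.sum_eq_sum_sdiff_singleton_add (Finset.mem_univ i) (fun j => s ((P j).symm x))]
  ring

lemma winner_eq {n m : ℕ} (s : Fin m → ℝ) (f : Profile n m → Fin m)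
    (r : Fin m → Fin m → Prop) (hr : IsStrictTotalOrder (Fin m) r)
    (hfP : ∀ P : Profile n m, f P ∈ ScoreSet s P ∧ ∀ y ∈ ScoreSet s P, y ≠ f P → r (f P) y)
    (P : Profile n m) (c : Fin m) (hc : c ∈ ScoreSet s P)
    (h2 : ∀ y, y ∈ ScoreSet s P → y ≠ c → r c y) : f P = c := by
  haveI := hr
  by_contra h
  have r1 : r (f P) c := (hfP P).2 c hc (fun e => h e.symm)
  have r2 : r c (f P) := h2 (f P) (hfP P).1 h
  exact (irrefl_of r (f P)) (trans_of r r1 r2)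

lemma key {n m : ℕ} (s : Fin m → ℝ) (f : Profile n m → Fin m)
    (r : Fin m → Fin m → Prop) (hr : IsStrictTotalOrder (Fin m) r)
    (hfP : ∀ P : Profile n m, f P ∈ ScoreSet s P ∧ ∀ y ∈ ScoreSet s P, y ≠ f P → r (f P) y)
    (P : Profile n m) (i : Fin n) (p' : Pref m) (B : Fin m)
    (hB : f P ≠ B)
    (Heq : s (p'.symm (f P)) = s ((P i).symm (f P)))
    (Hle : ∀ x, x ≠ B → s (p'.symm x) ≤ s ((P i).symm x)) :
    f (update P i p') = f P ∨ f (update P i p') = B := by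
  haveI := hr
  by_contra hcon
  push_neg at hcon
  obtain ⟨h1, h2⟩ := hcon
  set Q := update P i p' with hQdef
  have hupd : ∀ x, score s Q x = score s P x - s ((P i).symm x) + s (p'.symm x) :=
    fun x => score_update s P i p' x
  have hQle : score s Q (f Q) ≤ score s P (f Q) := by
    have := Hle (f Q) h2; rw [hupd]; linarith
  have hQc : score s Q (f P) = score s P (f P) := by rw [hupd]; linarith [Heq]
  have h3 : score s Q (f P) ≤ score s Q (f Q) := (hfP Q).1 (f P)
  have h4 : score s P (f Q) ≤ score s P (f P) := (hfP P).1 (f Q)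
  have e1 : score s P (f Q) = score s P (f P) := by linarith
  have e2 : score s Q (f P) = score s Q (f Q) := by linarith
  have m1 : f Q ∈ ScoreSet s P := by
    intro y
    calc score s P y ≤ score s P (f P) := (hfP P).1 y
    _ = score s P (f Q) := e1.symm
  have m2 : f P ∈ ScoreSet s Q := by
    intro y
    calc score s Q y ≤ score s Q (f Q) := (hfP Q).1 y
    _ = score s Q (f P) := e2.symm
  have r1 : r (f P) (f Q) := (hfP P).2 (f Q) m1 h1
  have r2 : r (f Q) (f P) := (hfP Q).2 (f P) m2 (fun e => h1 e.symm)
  exact (irrefl_of r (f P)) (trans_of r r1 r2)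


def stmtPw (m : ℕ) (hm : 3 ≤ m) (a b c : Fin m) : ℕ → Pref m := fun i =>
  if i = 0 then mk3 ⟨m-1, by omega⟩ ⟨m-2, by omega⟩ ⟨m-3, by omega⟩ a b c
  else if i = 1 then mk3 ⟨m-1, by omega⟩ ⟨m-2, by omega⟩ ⟨m-3, by omega⟩ b c a
  else if i = 2 then mk3 ⟨m-1, by omega⟩ ⟨m-2, by omega⟩ ⟨m-3, by omega⟩ c a b
  else if i % 2 = 1 then mk3 ⟨m-1, by omega⟩ ⟨m-2, by omega⟩ ⟨m-3, by omega⟩ c b a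
  else mk3 ⟨m-1, by omega⟩ ⟨m-2, by omega⟩ ⟨m-3, by omega⟩ b c a

set_option maxHeartbeats 1000000 in
/-- Assume n > 2 and m ≥ 3. No A-scoring rule whose scores satisfy
s_{m−1} < s_m (i.e. k* = m − 1) is regret-free truth-telling. -/
theorem stmt_8 (n m : ℕ) (hn : 2 < n) (hm : 3 ≤ m) (s : Fin m → ℝ)
    (hmono : Monotone s)
    (h1m : s ⟨0, by omega⟩ < s ⟨m - 1, by omega⟩)
    (hlast : s ⟨m - 2, by omega⟩ < s ⟨m - 1, by omega⟩)
    (f : Profile n m → Fin m) (hf : AScoring s f) :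
    ¬ RFTT f := by
  intro hR
  obtain ⟨r, hr, hfP⟩ := hf
  haveI := hr
  have h3n : 3 ≤ n := hn
  obtain ⟨pt, hptdef⟩ : ∃ x : Fin m, x = ⟨m-1, by omega⟩ := ⟨_, rfl⟩
  obtain ⟨ps, hpsdef⟩ : ∃ x : Fin m, x = ⟨m-2, by omega⟩ := ⟨_, rfl⟩
  obtain ⟨ph, hphdef⟩ : ∃ x : Fin m, x = ⟨m-3, by omega⟩ := ⟨_, rfl⟩
  have hhs : ph < ps := by rw [hphdef, hpsdef, Fin.mk_lt_mk]; omega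
  have hst : ps < pt := by rw [hpsdef, hptdef, Fin.mk_lt_mk]; omega
  have hht : ph < pt := lt_trans hhs hst
  have hpt_ps : pt ≠ ps := hst.ne'
  have hpt_ph : pt ≠ ph := hht.ne'
  have hps_ph : ps ≠ ph := hhs.ne'
  have hTS : s ps < s pt := by rw [hpsdef, hptdef]; exact hlast
  have hSH : s ph ≤ s ps := hmono hhs.le
  have hTH : s ph < s pt := lt_of_le_of_lt hSH hTS
  -- selection of the three alternatives
  have tri : ∀ u v : Fin m, u ≠ v → r u v ∨ r v u := by
    intro u v huv
    rcases trichotomous_of r u v with h | h | h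
    · exact Or.inl h
    · exact absurd h huv
    · exact Or.inr h
  have hsel : ∃ a b c : Fin m, a ≠ b ∧ a ≠ c ∧ b ≠ c ∧
      ((Even n ∧ r b c) ∨ (¬ Even n ∧ r c b ∧ r c a)) := by
    have hx01 : (⟨0, by omega⟩ : Fin m) ≠ ⟨1, by omega⟩ := by
      simp [Fin.ext_iff]
    have hx02 : (⟨0, by omega⟩ : Fin m) ≠ ⟨2, by omega⟩ := by
      simp [Fin.ext_iff]
    have hx12 : (⟨1, by omega⟩ : Fin m) ≠ ⟨2, by omega⟩ := by
      simp [Fin.ext_iff]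
    rcases Nat.even_or_odd n with hev | hod
    · rcases tri _ _ hx01 with h | h
      · exact ⟨⟨2, by omega⟩, ⟨0, by omega⟩, ⟨1, by omega⟩, hx02.symm, hx12.symm, hx01,
          Or.inl ⟨hev, h⟩⟩
      · exact ⟨⟨2, by omega⟩, ⟨1, by omega⟩, ⟨0, by omega⟩, hx12.symm, hx02.symm, hx01.symm,
          Or.inl ⟨hev, h⟩⟩
    · have hnev : ¬ Even n := Nat.not_even_iff_odd.mpr hod
      have pick : ∀ w l : Fin m, w ≠ l → w ≠ ⟨2, by omega⟩ → l ≠ ⟨2, by omega⟩ → r w l →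
          ∃ a b c : Fin m, a ≠ b ∧ a ≠ c ∧ b ≠ c ∧
          ((Even n ∧ r b c) ∨ (¬ Even n ∧ r c b ∧ r c a)) := by
        intro w l hwl hwx hlx hrwl
        rcases tri w _ hwx with h2 | h2
        · exact ⟨⟨2, by omega⟩, l, w, hlx.symm, hwx.symm, hwl.symm,
            Or.inr ⟨hnev, hrwl, h2⟩⟩
        · rcases tri _ l hlx.symm with h3 | h3
          · exact ⟨l, w, ⟨2, by omega⟩, hwl.symm, hlx, hwx,
              Or.inr ⟨hnev, h2, h3⟩⟩
          · exact absurd (trans_of r hrwl h3) (fun hh => (irrefl_of r w) (trans_of r hh h2))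
      rcases tri _ _ hx01 with h | h
      · exact pick _ _ hx01 hx02 hx12 h
      · exact pick _ _ hx01.symm hx12 hx02 h
  obtain ⟨a, b, c, hab, hac, hbc, hcase⟩ := hsel
  have hba := hab.symm
  have hca := hac.symm
  have hcb' := hbc.symm
  -- the profile
  obtain ⟨P, hPdef⟩ : ∃ Q : Profile n m, Q = fun i => stmtPw m hm a b c i.val := ⟨_, rfl⟩
  have hw0 : stmtPw m hm a b c 0 = mk3 pt ps ph a b c := by rw [hptdef, hpsdef, hphdef]; rfl
  have hw1 : stmtPw m hm a b c 1 = mk3 pt ps ph b c a := by rw [hptdef, hpsdef, hphdef]; rfl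
  have hw2 : stmtPw m hm a b c 2 = mk3 pt ps ph c a b := by rw [hptdef, hpsdef, hphdef]; rfl
  have hwodd : ∀ i, 3 ≤ i → i % 2 = 1 → stmtPw m hm a b c i = mk3 pt ps ph c b a := by
    intro i h3 hp
    simp only [stmtPw]
    rw [if_neg (by omega), if_neg (by omega), if_neg (by omega), if_pos hp,
      hptdef, hpsdef, hphdef]
  have hweven : ∀ i, 3 ≤ i → i % 2 = 0 → stmtPw m hm a b c i = mk3 pt ps ph b c a := by
    intro i h3 hp
    simp only [stmtPw]
    rw [if_neg (by omega), if_neg (by omega), if_neg (by omega), if_neg (by omega),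
      hptdef, hpsdef, hphdef]
  -- individual position values
  have ha0 : (stmtPw m hm a b c 0).symm a = pt := by
    rw [hw0]; exact mk3_symm_u hpt_ps hpt_ph hab hac
  have hb0 : (stmtPw m hm a b c 0).symm b = ps := by
    rw [hw0]; exact mk3_symm_v hps_ph hbc
  have hc0 : (stmtPw m hm a b c 0).symm c = ph := by
    rw [hw0]; exact mk3_symm_w pt ps ph a b c
  have ha1 : (stmtPw m hm a b c 1).symm a = ph := by
    rw [hw1]; exact mk3_symm_w pt ps ph b c a
  have hb1 : (stmtPw m hm a b c 1).symm b = pt := by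
    rw [hw1]; exact mk3_symm_u hpt_ps hpt_ph hbc hba
  have hc1 : (stmtPw m hm a b c 1).symm c = ps := by
    rw [hw1]; exact mk3_symm_v hps_ph hca
  have ha2 : (stmtPw m hm a b c 2).symm a = ps := by
    rw [hw2]; exact mk3_symm_v hps_ph hab
  have hb2 : (stmtPw m hm a b c 2).symm b = ph := by
    rw [hw2]; exact mk3_symm_w pt ps ph c a b
  have hc2 : (stmtPw m hm a b c 2).symm c = pt := by
    rw [hw2]; exact mk3_symm_u hpt_ps hpt_ph hca hcb'
  have haI : ∀ i, 3 ≤ i → (stmtPw m hm a b c i).symm a = ph := by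
    intro i h3
    rcases Nat.even_or_odd i with he | ho
    · rw [hweven i h3 (Nat.even_iff.mp he)]; exact mk3_symm_w pt ps ph b c a
    · rw [hwodd i h3 (Nat.odd_iff.mp ho)]; exact mk3_symm_w pt ps ph c b a
  have hbI : ∀ i, 3 ≤ i → (stmtPw m hm a b c i).symm b
      = if i % 2 = 1 then ps else pt := by
    intro i h3
    rcases Nat.even_or_odd i with he | ho
    · rw [hweven i h3 (Nat.even_iff.mp he), if_neg (by have := Nat.even_iff.mp he; omega)]
      exact mk3_symm_u hpt_ps hpt_ph hbc hba
    · rw [hwodd i h3 (Nat.odd_iff.mp ho), if_pos (Nat.odd_iff.mp ho)]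
      exact mk3_symm_v hps_ph hba
  have hcI : ∀ i, 3 ≤ i → (stmtPw m hm a b c i).symm c
      = if i % 2 = 1 then pt else ps := by
    intro i h3
    rcases Nat.even_or_odd i with he | ho
    · rw [hweven i h3 (Nat.even_iff.mp he), if_neg (by have := Nat.even_iff.mp he; omega)]
      exact mk3_symm_v hps_ph hca
    · rw [hwodd i h3 (Nat.odd_iff.mp ho), if_pos (Nat.odd_iff.mp ho)]
      exact mk3_symm_u hpt_ps hpt_ph hcb' hca
  -- other alternatives sit strictly below
  have hform : ∀ i : ℕ, ∃ u v w : Fin m,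
      stmtPw m hm a b c i = mk3 pt ps ph u v w ∧ u ≠ v ∧ u ≠ w ∧ v ≠ w ∧
      (u = a ∨ u = b ∨ u = c) ∧ (v = a ∨ v = b ∨ v = c) ∧ (w = a ∨ w = b ∨ w = c) := by
    intro i
    by_cases h0 : i = 0
    · subst h0
      exact ⟨a, b, c, hw0, hab, hac, hbc, Or.inl rfl, Or.inr (Or.inl rfl), Or.inr (Or.inr rfl)⟩
    · by_cases h1 : i = 1
      · subst h1
        exact ⟨b, c, a, hw1, hbc, hba, hca, Or.inr (Or.inl rfl), Or.inr (Or.inr rfl), Or.inl rfl⟩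
      · by_cases h2 : i = 2
        · subst h2
          exact ⟨c, a, b, hw2, hca, hcb', hab, Or.inr (Or.inr rfl), Or.inl rfl, Or.inr (Or.inl rfl)⟩
        · have h3 : 3 ≤ i := by omega
          rcases Nat.even_or_odd i with he | ho
          · exact ⟨b, c, a, hweven i h3 (Nat.even_iff.mp he), hbc, hba, hca,
              Or.inr (Or.inl rfl), Or.inr (Or.inr rfl), Or.inl rfl⟩
          · exact ⟨c, b, a, hwodd i h3 (Nat.odd_iff.mp ho), hcb', hca, hba,
              Or.inr (Or.inr rfl), Or.inr (Or.inl rfl), Or.inl rfl⟩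
  have hdpos : ∀ x : Fin m, x ≠ a → x ≠ b → x ≠ c → ∀ i : ℕ,
      s ((stmtPw m hm a b c i).symm x) ≤ s ph := by
    intro x hxa hxb hxc i
    obtain ⟨u, v, w, he, huv, huw, hvw, hu, hv, hw⟩ := hform i
    have hxu : x ≠ u := by rcases hu with h|h|h <;> rw [h] <;> assumption
    have hxv : x ≠ v := by rcases hv with h|h|h <;> rw [h] <;> assumption
    have hxw : x ≠ w := by rcases hw with h|h|h <;> rw [h] <;> assumption
    rw [he]
    have happ : mk3 pt ps ph u v w ((mk3 pt ps ph u v w).symm x) = x :=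
      Equiv.apply_symm_apply _ x
    have e1 : (mk3 pt ps ph u v w).symm x ≠ pt := by
      intro hh
      have h9 := happ
      rw [hh, mk3_p1 hpt_ps hpt_ph huv huw] at h9
      exact hxu h9.symm
    have e2 : (mk3 pt ps ph u v w).symm x ≠ ps := by
      intro hh
      have h9 := happ
      rw [hh, mk3_p2 hps_ph hvw] at h9
      exact hxv h9.symm
    have e3 : (mk3 pt ps ph u v w).symm x ≠ ph := by
      intro hh
      have h9 := happ
      rw [hh, mk3_p3 pt ps ph u v w] at h9
      exact hxw h9.symm
    apply hmono
    have hlt := ((mk3 pt ps ph u v w).symm x).isLt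
    rw [Fin.le_def]
    have v1 : ((mk3 pt ps ph u v w).symm x : ℕ) ≠ (pt : ℕ) := fun hh => e1 (Fin.ext hh)
    have v2 : ((mk3 pt ps ph u v w).symm x : ℕ) ≠ (ps : ℕ) := fun hh => e2 (Fin.ext hh)
    have v3 : ((mk3 pt ps ph u v w).symm x : ℕ) ≠ (ph : ℕ) := fun hh => e3 (Fin.ext hh)
    have hptv : (pt : ℕ) = m - 1 := by rw [hptdef]
    have hpsv : (ps : ℕ) = m - 2 := by rw [hpsdef]
    have hphv : (ph : ℕ) = m - 3 := by rw [hphdef]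
    show ((mk3 pt ps ph u v w).symm x : ℕ) ≤ (ph : ℕ)
    omega
  have hc_ge : ∀ i : ℕ, s ph ≤ s ((stmtPw m hm a b c i).symm c) := by
    intro i
    by_cases h0 : i = 0
    · subst h0; rw [hc0]
    · by_cases h1 : i = 1
      · subst h1; rw [hc1]; exact hSH
      · by_cases h2 : i = 2
        · subst h2; rw [hc2]; exact hTH.le
        · rw [hcI i (by omega)]
          split_ifs
          · exact hTH.le
          · exact hSH
  -- score as a range sum
  have hscore : ∀ x, score s P x = ∑ i ∈ Finset.range n, s ((stmtPw m hm a b c i).symm x) := by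
    intro x
    rw [hPdef]
    exact score_eq_sum_range s _ x
  have hsplitsum : ∀ F : ℕ → ℝ,
      ∑ i ∈ Finset.range n, F i = (F 0 + F 1 + F 2) + ∑ i ∈ Finset.Ico 3 n, F i := by
    intro F
    rw [Finset.range_eq_Ico, ← Finset.sum_Ico_consecutive F (Nat.zero_le 3) h3n]
    congr 1
    rw [← Finset.range_eq_Ico, Finset.sum_range_succ, Finset.sum_range_succ,
      Finset.sum_range_succ, Finset.sum_range_zero]
    ring
  -- score difference c vs b
  have hcb : score s P c - score s P b = (if Even n then s pt - s ps else 0) := by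
    rw [hscore c, hscore b, ← Finset.sum_sub_distrib]
    rw [hsplitsum (fun i => s ((stmtPw m hm a b c i).symm c) - s ((stmtPw m hm a b c i).symm b))]
    simp only [hc0, hc1, hc2, hb0, hb1, hb2]
    have hIco : ∑ i ∈ Finset.Ico 3 n,
        (s ((stmtPw m hm a b c i).symm c) - s ((stmtPw m hm a b c i).symm b))
        = (s pt - s ps) * (if Even n then 1 else 0) := by
      rw [← sum_alt_Ico h3n, Finset.mul_sum]
      refine Finset.sum_congr rfl ?_
      intro i hi
      have h3i : 3 ≤ i := (Finset.mem_Ico.mp hi).1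
      rcases Nat.even_or_odd i with he | ho
      · have hp : i % 2 = 0 := Nat.even_iff.mp he
        rw [hcI i h3i, hbI i h3i, if_neg (by omega), if_neg (by omega),
          Odd.neg_one_pow (he.add_one)]
        ring
      · have hp : i % 2 = 1 := Nat.odd_iff.mp ho
        rw [hcI i h3i, hbI i h3i, if_pos hp, if_pos hp, Even.neg_one_pow (ho.add_one)]
        ring
    rw [hIco]
    rcases Nat.even_or_odd n with h | h
    · rw [if_pos h, if_pos h]; ring
    · have hne : ¬ Even n := Nat.not_even_iff_odd.mpr h
      rw [if_neg hne, if_neg hne]; ring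
  -- score difference c vs a
  have hca2 : score s P c - score s P a
      = ∑ i ∈ Finset.Ico 3 n,
        (s ((stmtPw m hm a b c i).symm c) - s ((stmtPw m hm a b c i).symm a)) := by
    rw [hscore c, hscore a, ← Finset.sum_sub_distrib]
    rw [hsplitsum (fun i => s ((stmtPw m hm a b c i).symm c) - s ((stmtPw m hm a b c i).symm a))]
    simp only [hc0, hc1, hc2, ha0, ha1, ha2]
    ring
  have hca_term : ∀ i ∈ Finset.Ico 3 n,
      0 ≤ s ((stmtPw m hm a b c i).symm c) - s ((stmtPw m hm a b c i).symm a) := by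
    intro i hi
    have h3i : 3 ≤ i := (Finset.mem_Ico.mp hi).1
    rw [haI i h3i, hcI i h3i]
    split_ifs
    · linarith
    · linarith
  have hca_nonneg : 0 ≤ score s P c - score s P a := by
    rw [hca2]
    exact Finset.sum_nonneg hca_term
  have hca_pos : Even n → 0 < score s P c - score s P a := by
    intro hev
    have h4 : 4 ≤ n := by
      obtain ⟨t, ht⟩ := hev; omega
    rw [hca2]
    apply Finset.sum_pos' hca_term
    refine ⟨3, Finset.mem_Ico.mpr ⟨le_refl 3, by omega⟩, ?_⟩
    rw [haI 3 (by omega), hcI 3 (by omega), if_pos (by norm_num)]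
    linarith
  have hd : ∀ x : Fin m, x ≠ a → x ≠ b → x ≠ c → score s P x < score s P c := by
    intro x hxa hxb hxc
    rw [hscore x, hscore c]
    apply Finset.sum_lt_sum
    · intro i _
      exact le_trans (hdpos x hxa hxb hxc i) (hc_ge i)
    · refine ⟨2, Finset.mem_range.mpr (by omega), ?_⟩
      rw [hc2]
      exact lt_of_le_of_lt (hdpos x hxa hxb hxc 2) hTH
  -- the misreport
  obtain ⟨i0, hi0def⟩ : ∃ j : Fin n, j = ⟨0, by omega⟩ := ⟨_, rfl⟩
  have hPi0 : P i0 = mk3 pt ps ph a b c := by rw [hPdef, hi0def]; exact hw0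
  have hPa : (P i0).symm a = pt := by rw [hPi0]; exact mk3_symm_u hpt_ps hpt_ph hab hac
  have hPb : (P i0).symm b = ps := by rw [hPi0]; exact mk3_symm_v hps_ph hbc
  have hPc : (P i0).symm c = ph := by rw [hPi0]; exact mk3_symm_w pt ps ph a b c
  obtain ⟨Pi', hPi'def⟩ : ∃ q : Pref m, q = (P i0).trans (Equiv.swap a b) := ⟨_, rfl⟩
  have hPi'symm : ∀ x : Fin m, Pi'.symm x = (P i0).symm (Equiv.swap a b x) := by
    intro x
    rw [hPi'def, Equiv.symm_trans_apply, Equiv.symm_swap]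
  have hPi'a : Pi'.symm a = ps := by rw [hPi'symm, Equiv.swap_apply_left, hPb]
  have hPi'b : Pi'.symm b = pt := by rw [hPi'symm, Equiv.swap_apply_right, hPa]
  have hPi'x : ∀ x : Fin m, x ≠ a → x ≠ b → Pi'.symm x = (P i0).symm x := by
    intro x h1 h2
    rw [hPi'symm, Equiv.swap_apply_of_ne_of_ne h1 h2]
  have hQb : score s (update P i0 Pi') b = score s P b + (s pt - s ps) := by
    rw [score_update, hPi'b, hPb]; ring
  have hQa : score s (update P i0 Pi') a = score s P a - (s pt - s ps) := by
    rw [score_update, hPi'a, hPa]; ring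
  have hQd : ∀ x : Fin m, x ≠ a → x ≠ b → score s (update P i0 Pi') x = score s P x := by
    intro x h1 h2
    rw [score_update, hPi'x x h1 h2]; ring
  have hQc : score s (update P i0 Pi') c = score s P c := hQd c hca hcb'
  have hgap : 0 ≤ (if Even n then s pt - s ps else 0) ∧
      (if Even n then s pt - s ps else 0) ≤ s pt - s ps := by
    constructor <;> split_ifs <;> linarith
  -- winner at P is c
  have hfPc : f P = c := by
    apply winner_eq s f r hr hfP P c
    · intro y
      by_cases hy : y = c
      · subst hy; exact le_refl _
      · by_cases hyb : y = b
        · subst hyb; linarith [hgap.1, hcb]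
        · by_cases hya : y = a
          · subst hya; linarith [hca_nonneg]
          · exact (hd y hya hyb hy).le
    · intro y hy hyne
      have hyc : score s P c ≤ score s P y := hy c
      rcases hcase with ⟨hev, hrbc⟩ | ⟨hod, hrcb, hrca⟩
      · exfalso
        by_cases hyb : y = b
        · subst hyb
          rw [if_pos hev] at hcb
          linarith
        · by_cases hya : y = a
          · subst hya; linarith [hca_pos hev]
          · linarith [hd y hya hyb hyne]
      · by_cases hyb : y = b
        · subst hyb; exact hrcb
        · by_cases hya : y = a
          · subst hya; exact hrca
          · exfalso; linarith [hd y hya hyb hyne]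
  -- winner at the misreported profile is b
  have hfQb : f (update P i0 Pi') = b := by
    apply winner_eq s f r hr hfP _ b
    · intro y
      by_cases hyb : y = b
      · subst hyb; exact le_refl _
      · by_cases hyc : y = c
        · subst hyc; rw [hQc, hQb]; linarith [hgap.2, hcb]
        · by_cases hya : y = a
          · subst hya; rw [hQa, hQb]; linarith [hgap.2, hcb, hca_nonneg, hTS]
          · rw [hQd y hya hyb, hQb]
            linarith [hd y hya hyb hyc, hgap.2, hcb]
    · intro y hy hyne
      have hyb' : score s (update P i0 Pi') b ≤ score s (update P i0 Pi') y := hy b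
      rcases hcase with ⟨hev, hrbc⟩ | ⟨hod, hrcb, hrca⟩
      · by_cases hyc : y = c
        · subst hyc; exact hrbc
        · exfalso
          rw [if_pos hev] at hcb
          by_cases hya : y = a
          · subst hya
            rw [hQa, hQb] at hyb'
            linarith [hca_pos hev]
          · rw [hQd y hya hyne, hQb] at hyb'
            linarith [hd y hya hyne hyc]
      · exfalso
        rw [if_neg hod] at hcb
        by_cases hyc : y = c
        · subst hyc
          rw [hQc, hQb] at hyb'
          linarith
        · by_cases hya : y = a
          · subst hya
            rw [hQa, hQb] at hyb'
            linarith [hca_nonneg]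
          · rw [hQd y hya hyne, hQb] at hyb'
            linarith [hd y hya hyne hyc]
  -- apply RFTT
  have hpref : prefers (P i0) (f (update P i0 Pi')) (f P) := by
    rw [hfPc, hfQb]
    show (P i0).symm c < (P i0).symm b
    rw [hPb, hPc]
    exact hhs
  obtain ⟨Pstar, hs1, hs2, hs3⟩ := hR i0 P Pi' hpref
  have hfPstar : f Pstar = c := hs2.trans hfPc
  have hkey := key s f r hr hfP Pstar i0 Pi' b (by rw [hfPstar]; exact hcb')
    (by rw [hfPstar, hs1, hPi'x c hca hcb'])
    (by
      intro x hxb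
      rw [hs1]
      by_cases hxa : x = a
      · subst hxa; rw [hPi'a, hPa]; exact hTS.le
      · rw [hPi'x x hxa hxb])
  rcases hkey with h | h
  · rw [h, hfPstar] at hs3
    have h5 : (P i0).symm c < (P i0).symm c := hs3
    exact lt_irrefl _ h5
  · rw [h] at hs3
    have h5 : (P i0).symm b < (P i0).symm (f Pstar) := hs3
    rw [hfPstar, hPb, hPc] at h5
    exact absurd h5 (not_lt.mpr hhs.le)
end

section
/- Assume n > 2 and k*·n < m. Then an A-scoring rule (with these scores) is regret-free truth-telling if and only if k*·n = m − 1. -/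
open Function

/-! Positions `0, …, K-1` from the bottom score below the maximum and all other positions score
the maximum, so the scoring winners are exactly the alternatives that no agent ranks in its bottom
`K` positions (the *unvetoed* ones, of which there are at least `m - K n > 0`), and the rule picks
the `≻`-best unvetoed alternative.

If `K n = m - 1`, a profitable misreport by `i` must push the winner `a` into `i`'s bottom `K`.
Let the other agents' bottom positions cover exactly the alternatives other than `a` outside `i`'s
bottom `K`: then `a` is the only unvetoed alternative, and after the misreport the winner must lie
in `i`'s bottom `K`, below `a`.

If `K n ≤ m - 2`, let everybody report a ranking with the `≻`-best alternative `a` at position `K`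
and the `≻`-worst `d` at position `0`; swapping `a` and `d` is profitable for one agent. A regret
witness would force the winner after the swap to be `d`, which is impossible since at least two
alternatives are then unvetoed and `d` loses every tie-break. -/

open Finset

lemma exists_forall_ne_rel {α : Type*} [Finite α] [Nonempty α] (r : α → α → Prop)
    [IsStrictTotalOrder α r] : ∃ a, ∀ y, y ≠ a → r a y := by
  obtain ⟨a, -, ha⟩ := (Finite.wellFounded_of_trans_of_irrefl r).has_min Set.univ
    ⟨Classical.arbitrary α, trivial⟩
  exact ⟨a, fun y hy => ((trichotomous_of r y a).resolve_left (ha y trivial)).resolve_left hy⟩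

lemma Equiv.Perm.exists_apply_eq_and_apply_eq {α : Type*} {u v a b : α} (huv : u ≠ v)
    (hab : a ≠ b) : ∃ σ : Equiv.Perm α, σ u = a ∧ σ v = b := by
  obtain ⟨σ, hσ⟩ := Equiv.Perm.exists_extending_pair ![u, v] ![a, b]
    (by intro x y; fin_cases x <;> fin_cases y <;> simp [huv, huv.symm])
    (by intro x y; fin_cases x <;> fin_cases y <;> simp [hab, hab.symm])
  exact ⟨σ, hσ 0, hσ 1⟩

section Veto

variable {n m K : ℕ}

def Unvetoed (K : ℕ) (P : Profile n m) (x : Fin m) : Prop :=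
  ∀ i, K ≤ ((P i).symm x : ℕ)

instance (K : ℕ) (P : Profile n m) : DecidablePred (Unvetoed K P) :=
  fun _ => inferInstanceAs (Decidable (∀ _, _))

lemma unvetoed_update_iff {P : Profile n m} {i : Fin n} {p : Pref m} {x : Fin m} :
    Unvetoed K (update P i p) x ↔ K ≤ (p.symm x : ℕ) ∧ ∀ j ≠ i, K ≤ ((P j).symm x : ℕ) :=
  forall_update_iff P (p := fun _ (q : Pref m) => K ≤ (q.symm x : ℕ))

lemma card_bottom (p : Pref m) (hK : K ≤ m) : #{x | (p.symm x : ℕ) < K} = K := by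
  rw [card_equiv p.symm (t := {k : Fin m | (k : ℕ) < K}) (by simp), Fin.card_filter_val_lt,
    min_eq_right hK]

lemma card_vetoed_le (hK : K ≤ m) (P : Profile n m) : #{x | ¬ Unvetoed K P x} ≤ K * n :=
  calc #{x | ¬ Unvetoed K P x}
      ≤ #(univ.biUnion fun i => {x | ((P i).symm x : ℕ) < K}) :=
        card_le_card fun x => by simp [Unvetoed]
    _ ≤ ∑ i, #{x | ((P i).symm x : ℕ) < K} := card_biUnion_le
    _ = K * n := by simp [card_bottom _ hK, mul_comm]

lemma le_card_unvetoed (hK : K ≤ m) (P : Profile n m) : m - K * n ≤ #{x | Unvetoed K P x} := by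
  have := card_filter_add_card_filter_not (s := univ) (fun x => Unvetoed K P x)
  have := card_vetoed_le hK P
  simp only [card_univ, Fintype.card_fin] at *
  omega

lemma exists_pref_bottom_eq (B : Finset (Fin m)) :
    ∃ p : Pref m, ∀ x, (p.symm x : ℕ) < #B ↔ x ∈ B := by
  have hB : #B ≤ m := by simpa using card_le_univ B
  let e : {k : Fin m // (k : ℕ) < #B} ≃ {x // x ∈ B} :=
    Fintype.equivOfCardEq (by simp [Fintype.card_subtype, Fin.card_filter_val_lt, hB])
  refine ⟨e.extendSubtype, fun x => ?_⟩
  conv_rhs => rw [← e.extendSubtype.apply_symm_apply x]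
  by_cases hx : (e.extendSubtype.symm x : ℕ) < #B
  · simpa [hx] using e.extendSubtype_mem _ hx
  · simpa [hx] using e.extendSubtype_not_mem _ hx

lemma exists_prefs_bottom_cover {ι : Type*} [Fintype ι] (C : Finset (Fin m))
    (hC : #C = Fintype.card ι * K) :
    ∃ p : ι → Pref m, ∀ x, x ∈ C ↔ ∃ j, ((p j).symm x : ℕ) < K := by
  let e : C ≃ ι × Fin K := Fintype.equivOfCardEq (by simp [hC])
  let block (j : ι) : Finset (Fin m) := univ.image fun k => (e.symm (j, k) : Fin m)
  have hblock (j : ι) : #(block j) = K := by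
    rw [card_image_of_injective _ fun k k' h => by simpa using e.symm.injective (Subtype.ext h),
      card_univ, Fintype.card_fin]
  choose p hp using fun j => exists_pref_bottom_eq (block j)
  refine ⟨p, fun x => ?_⟩
  simp_rw [fun j => hblock j ▸ hp j x, block, mem_image, mem_univ, true_and]
  constructor
  · intro hx
    exact ⟨(e ⟨x, hx⟩).1, (e ⟨x, hx⟩).2, by simp⟩
  · rintro ⟨j, k, rfl⟩
    exact (e.symm (j, k)).2

lemma exists_profile_vetoing_all_but (i : Fin n) (p : Pref m) {a : Fin m}
    (ha : K ≤ (p.symm a : ℕ)) (hm : K * n + 1 = m) :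
    ∃ Q : Profile n m, Q i = p ∧
      ∀ x, (∃ j ≠ i, ((Q j).symm x : ℕ) < K) ↔ x ≠ a ∧ K ≤ (p.symm x : ℕ) := by
  classical
  set C : Finset (Fin m) := ({x | K ≤ (p.symm x : ℕ)} : Finset (Fin m)).erase a
  have hC : #C = Fintype.card {j // j ≠ i} * K := by
    have hsplit := card_filter_add_card_filter_not (s := univ) (fun x => (p.symm x : ℕ) < K)
    rw [card_bottom p (by omega)] at hsplit
    simp only [not_lt, card_univ, Fintype.card_fin] at hsplit
    rw [card_erase_of_mem (by simpa using ha), Fintype.card_subtype_compl, Fintype.card_fin,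
      Fintype.card_unique]
    obtain ⟨n, rfl⟩ : ∃ n', n = n' + 1 := ⟨n - 1, by have := i.2; omega⟩
    simp only [Nat.add_sub_cancel, ← hm] at hsplit ⊢
    rw [mul_add, mul_one] at hsplit
    rw [mul_comm]
    omega
  obtain ⟨q, hq⟩ := exists_prefs_bottom_cover C hC
  refine ⟨fun j => if h : j = i then p else q ⟨j, h⟩, by simp, fun x => ?_⟩
  have hxC : x ∈ C ↔ x ≠ a ∧ K ≤ (p.symm x : ℕ) := by simp [C]
  rw [← hxC, hq]
  constructor
  · rintro ⟨j, hj, hx⟩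
    exact ⟨⟨j, hj⟩, by simpa [hj] using hx⟩
  · rintro ⟨⟨j, hj⟩, hx⟩
    exact ⟨j, hj, by simpa [hj] using hx⟩

end Veto

section Rule

variable {n m K : ℕ} {r : Fin m → Fin m → Prop} {f : Profile n m → Fin m}

def SelectsBestUnvetoed (K : ℕ) (r : Fin m → Fin m → Prop) (f : Profile n m → Fin m) : Prop :=
  ∀ P, Unvetoed K P (f P) ∧ ∀ y, Unvetoed K P y → y ≠ f P → r (f P) y

lemma scoreSet_eq_unvetoed (s : Fin m → ℝ) (M : ℝ) (hlow : ∀ j : Fin m, (j : ℕ) < K → s j < M)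
    (hhigh : ∀ j : Fin m, K ≤ (j : ℕ) → s j = M) (P : Profile n m)
    (hP : ∃ x, Unvetoed K P x) : ScoreSet s P = {x | Unvetoed K P x} := by
  have hle (x : Fin m) (i : Fin n) : s ((P i).symm x) ≤ M := by
    rcases lt_or_ge ((P i).symm x : ℕ) K with h | h
    exacts [(hlow _ h).le, (hhigh _ h).le]
  have hmax (x : Fin m) (hx : Unvetoed K P x) : score s P x = ∑ _i : Fin n, M :=
    sum_congr rfl fun i _ => hhigh _ (hx i)
  have hlt (x : Fin m) (hx : ¬ Unvetoed K P x) : score s P x < ∑ _i : Fin n, M := by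
    obtain ⟨i, hi⟩ := not_forall.1 hx
    exact sum_lt_sum (fun i _ => hle x i) ⟨i, mem_univ i, hlow _ (not_le.1 hi)⟩
  obtain ⟨x₀, hx₀⟩ := hP
  ext x
  refine ⟨fun hx => ?_, fun hx y => ?_⟩
  · by_contra h
    linarith [hx x₀, hmax x₀ hx₀, hlt x h]
  · rw [hmax x hx]
    exact sum_le_sum fun i _ => hle y i

lemma selectsBestUnvetoed_of_scoring (s : Fin m → ℝ) (M : ℝ)
    (hlow : ∀ j : Fin m, (j : ℕ) < K → s j < M) (hhigh : ∀ j : Fin m, K ≤ (j : ℕ) → s j = M)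
    (hK : K ≤ m) (hKn : K * n < m)
    (hf : ∀ P, f P ∈ ScoreSet s P ∧ ∀ y ∈ ScoreSet s P, y ≠ f P → r (f P) y) :
    SelectsBestUnvetoed K r f := by
  intro P
  have hP : ∃ x, Unvetoed K P x := by
    have : 0 < #{x | Unvetoed K P x} := by have := le_card_unvetoed hK P; omega
    obtain ⟨x, hx⟩ := card_pos.1 this
    exact ⟨x, (mem_filter.1 hx).2⟩
  simpa [scoreSet_eq_unvetoed s M hlow hhigh P hP] using hf P

namespace SelectsBestUnvetoed

variable [IsStrictTotalOrder (Fin m) r]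

lemma apply_eq (hf : SelectsBestUnvetoed K r f) {P : Profile n m} {a : Fin m} (ha : Unvetoed K P a)
    (hbest : ∀ y, Unvetoed K P y → y ≠ a → r a y) : f P = a := by
  by_contra hne
  exact asymm_of r ((hf P).2 a ha (Ne.symm hne)) (hbest _ (hf P).1 hne)

lemma apply_ne_of_forall_rel (hf : SelectsBestUnvetoed K r f) (hK : K ≤ m) (hm : K * n + 2 ≤ m)
    (P : Profile n m) {d : Fin m} (hd : ∀ y, y ≠ d → r y d) : f P ≠ d := by
  intro hfd
  obtain ⟨y, hy, hyd⟩ := exists_mem_ne (s := {x | Unvetoed K P x})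
    (by have := le_card_unvetoed hK P; omega) d
  subst hfd
  exact asymm_of r ((hf P).2 y (mem_filter.1 hy).2 hyd) (hd y hyd)

lemma symm_lt_of_prefers (hf : SelectsBestUnvetoed K r f) {P : Profile n m} {i : Fin n}
    {p : Pref m} (hgain : prefers (P i) (f (update P i p)) (f P)) :
    (p.symm (f P) : ℕ) < K := by
  set Q := update P i p
  by_contra! hK
  have hne : f Q ≠ f P := fun h => (h ▸ hgain).false
  have hQ : Unvetoed K Q (f P) := unvetoed_update_iff.2 ⟨hK, fun j _ => (hf P).1 j⟩
  have hbeat : r (f Q) (f P) := (hf Q).2 _ hQ hne.symm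
  obtain ⟨j, hj⟩ : ∃ j, ((P j).symm (f Q) : ℕ) < K := by
    by_contra! h
    exact asymm_of r hbeat ((hf P).2 _ h hne)
  obtain rfl : j = i := by
    by_contra hji
    exact (unvetoed_update_iff.1 (hf Q).1).2 j hji |>.not_gt hj
  exact hgain.not_ge (by have := (hf P).1 j; rw [Fin.le_def]; omega)

lemma rftt (hf : SelectsBestUnvetoed K r f) (hm : K * n + 1 = m) : RFTT f := by
  intro i P p hgain
  have ha := (hf P).1
  obtain ⟨Q, hQi, hQ⟩ := exists_profile_vetoing_all_but i (P i) (ha i) hm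
  have hfQ : f Q = f P := by
    refine hf.apply_eq (fun j => ?_) fun y hy hne => absurd ?_ hne
    · by_cases hj : j = i
      · exact hj ▸ hQi ▸ ha i
      · exact not_lt.1 fun h => ((hQ _).1 ⟨j, hj, h⟩).1 rfl
    · by_contra hne
      rcases lt_or_ge ((P i).symm y : ℕ) K with h | h
      · exact (hy i).not_gt (hQi ▸ h)
      · obtain ⟨j, -, hj⟩ := (hQ y).2 ⟨hne, h⟩
        exact (hy j).not_gt hj
  refine ⟨Q, hQi, hfQ, ?_⟩
  obtain ⟨hci, hcj⟩ := unvetoed_update_iff.1 (hf (update Q i p)).1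
  have hca : f (update Q i p) ≠ f P := by
    intro h
    exact (hf.symm_lt_of_prefers hgain).not_ge (h ▸ hci)
  have hc : ((P i).symm (f (update Q i p)) : ℕ) < K := by
    by_contra! h
    obtain ⟨j, hji, hj⟩ := (hQ _).2 ⟨hca, h⟩
    exact (hcj j hji).not_gt hj
  rw [hfQ, prefers, Fin.lt_def]
  exact hc.trans_le (ha i)

lemma not_rftt (hf : SelectsBestUnvetoed K r f) (hn : 2 ≤ n) (hK : 0 < K) (hm : K * n + 2 ≤ m) :
    ¬ RFTT f := by
  intro hR
  have hKm : K < m := by nlinarith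
  have : Nontrivial (Fin m) := Fin.nontrivial_iff_two_le.2 (by omega)
  obtain ⟨a, ha⟩ := exists_forall_ne_rel r
  obtain ⟨d, hd⟩ := exists_forall_ne_rel (swap r)
  have had : a ≠ d := by
    rintro rfl
    obtain ⟨y, hy⟩ := exists_ne a
    exact asymm_of r (ha y hy) (hd y hy)
  obtain ⟨σ, hσa, hσd⟩ := Equiv.Perm.exists_apply_eq_and_apply_eq
    (u := (⟨K, hKm⟩ : Fin m)) (v := ⟨0, by omega⟩) (by simp [Fin.ext_iff]; omega) had
  have hσa' : (σ.symm a : ℕ) = K := by rw [← hσa, σ.symm_apply_apply]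
  have hσd' : (σ.symm d : ℕ) = 0 := by rw [← hσd, σ.symm_apply_apply]
  set p : Pref m := σ.trans (Equiv.swap a d)
  have hp (x : Fin m) : p.symm x = σ.symm (Equiv.swap a d x) := by simp [p]
  let i : Fin n := ⟨0, by omega⟩
  let j : Fin n := ⟨1, by omega⟩
  have hji : j ≠ i := by simp [Fin.ext_iff, i, j]
  let P : Profile n m := fun _ => σ
  have hfP : f P = a := hf.apply_eq (fun _ => hσa'.ge) fun y _ hy => ha y hy
  have hgain : prefers σ (f (update P i p)) a := by
    obtain ⟨hb, hbj⟩ := unvetoed_update_iff.1 (hf (update P i p)).1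
    have hba : f (update P i p) ≠ a := by
      intro h
      rw [h, hp, Equiv.swap_apply_left, hσd'] at hb
      omega
    have : K ≤ (σ.symm (f (update P i p)) : ℕ) := hbj j hji
    have := Fin.val_injective.ne (σ.symm.injective.ne hba)
    rw [prefers, Fin.lt_def, hσa']
    omega
  obtain ⟨Q, -, hfQ, hloss⟩ := hR i P p (hfP ▸ hgain)
  rw [hfQ, hfP, prefers, Fin.lt_def, hσa'] at hloss
  refine hf.apply_ne_of_forall_rel hKm.le hm (update Q i p) hd ?_
  by_contra hcd
  have hca : f (update Q i p) ≠ a := fun h => by rw [h, hσa'] at hloss; omega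
  have := (unvetoed_update_iff.1 (hf (update Q i p)).1).1
  rw [hp, Equiv.swap_apply_of_ne_of_ne hca hcd] at this
  exact this.not_gt hloss

end SelectsBestUnvetoed

end Rule

/-- Assume n > 2 and k*·n < m. Then an A-scoring rule (with these scores)
is regret-free truth-telling if and only if k*·n = m − 1.  Here `K` is the
(1-indexed) value k*: the largest position whose score is not maximal. -/
theorem stmt_10 (n m : ℕ) (hn : 2 < n) (hm : 2 ≤ m) (s : Fin m → ℝ)
    (hmono : Monotone s) (K : ℕ) (hK1 : 1 ≤ K) (hKm : K ≤ m - 1)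
    (hKlt : s ⟨K - 1, by omega⟩ < s ⟨K, by omega⟩)
    (hKconst : ∀ j : Fin m, K ≤ (j : ℕ) → s j = s ⟨m - 1, by omega⟩)
    (hKn : K * n < m)
    (f : Profile n m → Fin m) (hf : AScoring s f) :
    RFTT f ↔ K * n = m - 1 := by
  obtain ⟨r, hr, hspec⟩ := hf
  have hlow (j : Fin m) (hj : (j : ℕ) < K) : s j < s ⟨m - 1, by omega⟩ :=
    calc s j ≤ s ⟨K - 1, by omega⟩ := hmono (Fin.mk_le_mk.2 (by omega))
      _ < s ⟨K, by omega⟩ := hKlt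
      _ = s ⟨m - 1, by omega⟩ := hKconst _ le_rfl
  have hsel : SelectsBestUnvetoed K r f :=
    selectsBestUnvetoed_of_scoring s _ hlow hKconst (by omega) hKn hspec
  constructor
  · intro hR
    by_contra hne
    exact hsel.not_rftt (by omega) hK1 (by omega) hR
  · intro h
    exact hsel.rftt (by omega)
end

section
/- Assume n > 2 and m ≥ 3. Then no successive elimination rule is regret-free truth-telling. -/
open Function

/-!
Agent `0` is made pivotal in the opening contest of the agenda `a, b, c, …`: he ranks
`a ≻ b ≻ ⋯ ≻ c`, agents `1, …, n/2` rank `b ≻ c ≻ a ≻ ⋯` and the remaining agents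
`c ≻ a ≻ b ≻ ⋯`. Truthfully `a` beats `b` and then loses to `c`, which wins. Reporting
`b ≻ a ≻ ⋯ ≻ c` instead, agent `0` lets `b` beat `a`, and `b` then survives `c` and everything
else. So the misreport pays off, while the truthful outcome `c` is agent `0`'s worst
alternative: no subprofile consistent with it can make the misreport look worse in hindsight.
-/

open Finset

section Preferences

variable {m : ℕ}

theorem exists_pref_of_injective {α : Type*} [LinearOrder α] (u : Fin m → α)
    (hu : Injective u) : ∃ p : Pref m, ∀ x y, prefers p x y ↔ u y < u x := by
  have hmono : StrictMono (u ∘ Tuple.sort u) :=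
    (Tuple.monotone_sort u).strictMono_of_injective (hu.comp (Tuple.sort u).injective)
  refine ⟨Tuple.sort u, fun x y => ?_⟩
  simpa [prefers] using
    (hmono.lt_iff_lt (a := (Tuple.sort u).symm y) (b := (Tuple.sort u).symm x)).symm

def topThreeUtility (a b c : Fin m) (ua ub uc : ℤ) (x : Fin m) : ℤ :=
  if x = a then ua else if x = b then ub else if x = c then uc else x

section topThreeUtility

variable {a b c : Fin m} {ua ub uc : ℤ}

@[simp]
theorem topThreeUtility_left : topThreeUtility a b c ua ub uc a = ua := if_pos rfl

@[simp]
theorem topThreeUtility_mid (hab : a ≠ b) : topThreeUtility a b c ua ub uc b = ub := by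
  simp [topThreeUtility, Ne.symm hab]

@[simp]
theorem topThreeUtility_right (hac : a ≠ c) (hbc : b ≠ c) :
    topThreeUtility a b c ua ub uc c = uc := by
  simp [topThreeUtility, Ne.symm hac, Ne.symm hbc]

@[simp]
theorem topThreeUtility_of_ne {x : Fin m} (ha : x ≠ a) (hb : x ≠ b) (hc : x ≠ c) :
    topThreeUtility a b c ua ub uc x = x := by
  simp [topThreeUtility, ha, hb, hc]

theorem topThreeUtility_injective (hab : a ≠ b) (hac : a ≠ c) (hbc : b ≠ c)
    (hu : ua ≠ ub ∧ ua ≠ uc ∧ ub ≠ uc)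
    (hout : ∀ v ∈ [ua, ub, uc], v < 0 ∨ m ≤ v) :
    Injective (topThreeUtility a b c ua ub uc) := by
  intro x y hxy
  simp only [List.mem_cons, List.not_mem_nil, forall_eq_or_imp] at hout
  have hx := x.isLt
  have hy := y.isLt
  unfold topThreeUtility at hxy
  split_ifs at hxy <;> first | (subst_vars; rfl) | omega

end topThreeUtility

end Preferences

section Profiles

variable {n m : ℕ}

def IsRepresentedBy {α : Type*} [LT α] (P : Profile n m) (u : Fin n → Fin m → α) : Prop :=
  ∀ j x y, prefers (P j) x y ↔ u j y < u j x

theorem exists_profile_isRepresentedBy {α : Type*} [LinearOrder α] (u : Fin n → Fin m → α)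
    (hu : ∀ j, Injective (u j)) : ∃ P : Profile n m, IsRepresentedBy P u := by
  choose P hP using fun j => exists_pref_of_injective (u j) (hu j)
  exact ⟨P, hP⟩

theorem IsRepresentedBy.update {α : Type*} [LT α] {P : Profile n m} {u : Fin n → Fin m → α}
    (hP : IsRepresentedBy P u) (i : Fin n) {p : Pref m} {v : Fin m → α}
    (hp : ∀ x y, prefers p x y ↔ v y < v x) : IsRepresentedBy (update P i p) (update u i v) := by
  intro j
  rcases eq_or_ne j i with rfl | hj
  · simpa using hp
  · simpa [update_of_ne hj] using hP j

theorem RFTT.not_prefers_of_worst {f : Profile n m → Fin m} (hf : RFTT f) {i : Fin n}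
    {P : Profile n m} (hworst : ∀ y, ¬ prefers (P i) (f P) y) (Pi' : Pref m) :
    ¬ prefers (P i) (f (update P i Pi')) (f P) := fun hbetter => by
  obtain ⟨Pstar, -, hfPstar, hregret⟩ := hf i P Pi' hbetter
  exact hworst _ (hfPstar ▸ hregret)

theorem duel_eq_ite_of_supporters (P : Profile n m) {c y : Fin m} (hcy : c ≠ y)
    (S : Finset (Fin n)) (hS : ∀ j, prefers (P j) y c ↔ j ∈ S) :
    duel P c y = if n < 2 * #S then y else c := by
  have hyc : numPref P y c = #S := by
    simp only [numPref, hS, filter_mem_eq_inter, univ_inter]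
  have hcy : numPref P c y = n - #S := by
    have : ∀ j, prefers (P j) c y ↔ j ∈ Sᶜ := fun j => by
      rw [mem_compl, ← hS, prefers, prefers, not_lt, le_iff_lt_or_eq, or_iff_left]
      exact fun h => hcy ((P j).symm.injective h).symm
    simp only [numPref, this, filter_mem_eq_inter, univ_inter, card_compl, Fintype.card_fin]
  have := card_le_univ S
  simp only [Fintype.card_fin] at this
  unfold duel
  split_ifs <;> omega

theorem seRun_eq_of_forall_duel_eq (P : Profile n m) (c : Fin m) (l : List (Fin m))
    (h : ∀ y ∈ l, duel P c y = c) : seRun P c l = c := by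
  induction l with
  | nil => rfl
  | cons y t ih =>
      rw [seRun, h y List.mem_cons_self]
      exact ih fun z hz => h z (List.mem_cons_of_mem y hz)

end Profiles

section Manipulation

variable {n m : ℕ} [NeZero n] {a b c : Fin m}

/-- Agent `0` ranks `a ≻ b ≻ ⋯ ≻ c`; agents `0 < j ≤ h` rank `b ≻ c ≻ a ≻ ⋯`; agents `j > h`
rank `c ≻ a ≻ b ≻ ⋯`. -/
def pivotalUtility (a b c : Fin m) (h : Fin n) (j : Fin n) : Fin m → ℤ :=
  if j = 0 then topThreeUtility a b c (m + 2) (m + 1) (-1)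
  else if j ≤ h then topThreeUtility a b c m (m + 2) (m + 1)
  else topThreeUtility a b c (m + 1) m (m + 2)

theorem pivotalUtility_injective (hab : a ≠ b) (hac : a ≠ c) (hbc : b ≠ c) (h j : Fin n) :
    Injective (pivotalUtility a b c h j) := by
  unfold pivotalUtility
  split_ifs <;> exact topThreeUtility_injective hab hac hbc (by omega) (by simp)

theorem eq_zero_or_le_or_lt (h j : Fin n) :
    j = 0 ∨ (j ≠ 0 ∧ j ≤ h) ∨ (j ≠ 0 ∧ h < j) := by
  rcases eq_or_ne j 0 with hj | hj
  · exact .inl hj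
  · exact .inr ((le_or_gt j h).imp (⟨hj, ·⟩) (⟨hj, ·⟩))

variable {h j : Fin n}

@[simp]
theorem pivotalUtility_zero :
    pivotalUtility a b c h 0 = topThreeUtility a b c (m + 2) (m + 1) (-1) :=
  if_pos rfl

@[simp]
theorem pivotalUtility_of_ne_zero_of_le (hj0 : j ≠ 0) (hjh : j ≤ h) :
    pivotalUtility a b c h j = topThreeUtility a b c m (m + 2) (m + 1) := by
  simp [pivotalUtility, hj0, hjh]

@[simp]
theorem pivotalUtility_of_lt (hj : h < j) :
    pivotalUtility a b c h j = topThreeUtility a b c (m + 1) m (m + 2) := by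
  simp [pivotalUtility, (hj.trans_le' (Fin.zero_le h)).ne', hj.not_ge]

theorem seRun_pivotal_eq_worst (hn : 3 ≤ n) (hh : (h : ℕ) = n / 2) {rest : List (Fin m)}
    (hnodup : (a :: b :: c :: rest).Nodup) {P : Profile n m}
    (hP : IsRepresentedBy P (pivotalUtility a b c h)) :
    seRun P a (b :: c :: rest) = c := by
  simp only [List.nodup_cons, List.mem_cons, not_or] at hnodup
  obtain ⟨⟨hab, hac, ha⟩, ⟨hbc, hb⟩, hc, -⟩ := hnodup
  have hd1 : duel P a b = a := by
    rw [duel_eq_ite_of_supporters P hab (Ioc 0 h) fun j => ?_, if_neg (by simp [hh]; omega)]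
    rw [hP]
    rcases eq_zero_or_le_or_lt h j with hj | hj | hj <;>
      simp [hj, hab, Fin.pos_iff_ne_zero]
  have hd2 : duel P a c = c := by
    rw [duel_eq_ite_of_supporters P hac {0}ᶜ fun j => ?_,
      if_pos (by rw [card_compl, card_singleton, Fintype.card_fin]; omega)]
    rw [hP]
    rcases eq_zero_or_le_or_lt h j with hj | hj | hj <;> simp [hj, hac, hbc]
    omega
  have hd3 : ∀ x ∈ rest, duel P c x = c := fun x hx => by
    have hx : x ≠ a ∧ x ≠ b ∧ x ≠ c := ⟨(ha <| · ▸ hx), (hb <| · ▸ hx), (hc <| · ▸ hx)⟩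
    rw [duel_eq_ite_of_supporters P hx.2.2.symm {0} fun j => ?_, if_neg (by simp; omega)]
    have := x.isLt
    rw [hP]
    rcases eq_zero_or_le_or_lt h j with hj | hj | hj <;> simp [hj, hx, hac, hbc] <;> omega
  rw [seRun, seRun, hd1, hd2, seRun_eq_of_forall_duel_eq P c rest hd3]

theorem seRun_pivotal_misreport_eq (hh : (h : ℕ) = n / 2) {rest : List (Fin m)}
    (hnodup : (a :: b :: c :: rest).Nodup) {P : Profile n m}
    (hP : IsRepresentedBy P
      (update (pivotalUtility a b c h) 0 (topThreeUtility a b c (m + 1) (m + 2) (-1)))) :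
    seRun P a (b :: c :: rest) = b := by
  simp only [List.nodup_cons, List.mem_cons, not_or] at hnodup
  obtain ⟨⟨hab, hac, ha⟩, ⟨hbc, hb⟩, hc, -⟩ := hnodup
  have hd1 : duel P a b = b := by
    rw [duel_eq_ite_of_supporters P hab (Iic h) fun j => ?_, if_pos (by simp [hh]; omega)]
    rw [hP]
    rcases eq_zero_or_le_or_lt h j with hj | hj | hj <;> simp [hj, hab]
  have hd2 : duel P b c = b := by
    rw [duel_eq_ite_of_supporters P hbc (Ioi h) fun j => ?_, if_neg (by simp [hh]; omega)]
    rw [hP]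
    rcases eq_zero_or_le_or_lt h j with hj | hj | hj <;> simp [hj, hab, hac, hbc]
    omega
  have hd3 : ∀ x ∈ rest, duel P b x = b := fun x hx => by
    have hx : x ≠ a ∧ x ≠ b ∧ x ≠ c := ⟨(ha <| · ▸ hx), (hb <| · ▸ hx), (hc <| · ▸ hx)⟩
    rw [duel_eq_ite_of_supporters P hx.2.1.symm ∅ fun j => ?_, if_neg (by simp)]
    have := x.isLt
    rw [hP]
    rcases eq_zero_or_le_or_lt h j with hj | hj | hj <;>
      simp [hj, hx, hab] <;> omega
  rw [seRun, seRun, hd1, hd2, seRun_eq_of_forall_duel_eq P b rest hd3]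

end Manipulation

/-- Assume n > 2 and m ≥ 3. Then no successive elimination rule is
regret-free truth-telling. -/
theorem stmt_17 (n m : ℕ) (hn : 2 < n) (hm : 3 ≤ m)
    (f : Profile n m → Fin m) (hf : SuccElim f) :
    ¬ RFTT f := by
  intro hR
  obtain ⟨e, he⟩ := hf
  have : NeZero n := ⟨by omega⟩
  obtain ⟨a, b, c, rest, hL⟩ : ∃ a b c rest, (List.finRange m).map e = a :: b :: c :: rest := by
    rcases hL : (List.finRange m).map e with _ | ⟨a, _ | ⟨b, _ | ⟨c, rest⟩⟩⟩
    all_goals have := congrArg List.length hL; simp at this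
    all_goals first | omega | exact ⟨a, b, c, rest, rfl⟩
  have hnodup : (a :: b :: c :: rest).Nodup := hL ▸ (List.nodup_finRange m).map e.injective
  obtain ⟨⟨hab, hac, -⟩, ⟨hbc, -⟩, -⟩ := by
    simpa only [List.nodup_cons, List.mem_cons, not_or] using hnodup
  let h : Fin n := ⟨n / 2, by omega⟩
  obtain ⟨P, hP⟩ := exists_profile_isRepresentedBy _ (pivotalUtility_injective hab hac hbc h)
  obtain ⟨p', hp'⟩ := exists_pref_of_injective (topThreeUtility a b c (m + 1) (m + 2) (-1))
    (topThreeUtility_injective hab hac hbc (by omega) (by simp))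
  have hfP : f P = c := Option.some.inj <| (he P).symm.trans <| by
    rw [hL, seWinner?, seRun_pivotal_eq_worst (by omega) rfl hnodup hP]
  have hfP' : f (update P 0 p') = b := Option.some.inj <| (he _).symm.trans <| by
    rw [hL, seWinner?, seRun_pivotal_misreport_eq rfl hnodup (hP.update 0 hp')]
  have hworst : ∀ y, ¬ prefers (P 0) (f P) y := fun y => by
    rw [hfP, hP, pivotalUtility_zero, topThreeUtility_right hac hbc, not_lt]
    unfold topThreeUtility
    split_ifs <;> omega
  have hbetter : prefers (P 0) (f (update P 0 p')) (f P) := by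
    rw [hfP, hfP', hP]
    simp [hab, hac, hbc]
  exact hR.not_prefers_of_worst hworst p' hbetter
end
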